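/- arXiv:math/0408235 — 9 statements merged into one kernel-verified Lean document; each statement's English description precedes it below -/
import Mathlib

section
/- Let H be a complex Hilbert space, let p ∈ B(H) be an orthogonal projection (p = p* = p ∘ p), and let b, c ∈ B(H) satisfy c* ∘ b = p and ‖b + c‖ ≤ 2. Then ker p ⊆ ker b ∩ ker c if and only if b = c; and in this case ker p = ker b = ker c. -/
/-!
On the range of `p` we have `⟪b y, c y⟫ = ⟪c† b y, y⟫ = ‖y‖²`, while `‖b y + c y‖ ≤ 2‖y‖`; the
parallelogram law then forces `‖b y - c y‖ = 0`. So `b` and `c` always agree on the range of `p`,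
and if both also vanish on `ker p` they agree everywhere. Conversely, if `b = c` then
`p = b† b`, whose kernel is `ker b`.
-/

open ContinuousLinearMap
open scoped InnerProductSpace

section

variable {𝕜 E F : Type*} [RCLike 𝕜] [NormedAddCommGroup E] [InnerProductSpace 𝕜 E]
  [NormedAddCommGroup F] [InnerProductSpace 𝕜 F]

theorem eq_of_re_inner_eq_sq_of_norm_add_le {u v : E} {r : ℝ}
    (hinner : RCLike.re ⟪u, v⟫_𝕜 = r ^ 2) (hnorm : ‖u + v‖ ≤ 2 * r) : u = v := by
  have hsq : ‖u + v‖ ^ 2 ≤ (2 * r) ^ 2 := pow_le_pow_left₀ (norm_nonneg _) hnorm 2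
  have hsub : ‖u - v‖ ^ 2 = ‖u + v‖ ^ 2 - 4 * r ^ 2 := by
    rw [norm_add_sq (𝕜 := 𝕜), norm_sub_sq (𝕜 := 𝕜), hinner]; ring
  rw [← sub_eq_zero, ← norm_eq_zero]
  nlinarith [norm_nonneg (u - v)]

variable [CompleteSpace E] [CompleteSpace F]

theorem apply_eq_apply_of_adjoint_apply_eq {b c : E →L[𝕜] F} {y : E} (hy : adjoint c (b y) = y)
    (hnorm : ‖b + c‖ ≤ 2) : b y = c y := by
  refine eq_of_re_inner_eq_sq_of_norm_add_le (𝕜 := 𝕜) (r := ‖y‖) ?_ ?_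
  · rw [← adjoint_inner_left, hy, inner_self_eq_norm_sq]
  · calc ‖b y + c y‖ = ‖(b + c) y‖ := rfl
      _ ≤ ‖b + c‖ * ‖y‖ := (b + c).le_opNorm y
      _ ≤ 2 * ‖y‖ := by gcongr

theorem eq_of_adjoint_comp_eq_of_ker_le {p : E →L[𝕜] E} {b c : E →L[𝕜] F}
    (hp : IsIdempotentElem p) (hcb : adjoint c ∘L b = p) (hnorm : ‖b + c‖ ≤ 2)
    (hker : p.ker ≤ b.ker ⊓ c.ker) : b = c := by
  ext x
  have hpx : p (p x) = p x := DFunLike.congr_fun hp.eq x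
  have hrange : b (p x) = c (p x) :=
    apply_eq_apply_of_adjoint_apply_eq (by rw [← comp_apply, hcb, hpx]) hnorm
  have hcompl : x - p x ∈ p.ker := by
    rw [LinearMap.mem_ker, coe_coe, map_sub, hpx, sub_self]
  obtain ⟨hb, hc⟩ := hker hcompl
  have hb : b (x - p x) = 0 := hb
  have hc : c (x - p x) = 0 := hc
  rw [← sub_add_cancel x (p x), map_add, map_add, hb, hc, hrange]

end

theorem stmt_1_general {H : Type*} [NormedAddCommGroup H] [InnerProductSpace ℂ H] [CompleteSpace H]
    (p b c : H →L[ℂ] H)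
    (hpidem : p ∘L p = p)
    (hcb : (ContinuousLinearMap.adjoint c) ∘L b = p)
    (hnorm : ‖b + c‖ ≤ 2) :
    (LinearMap.ker (p : H →ₗ[ℂ] H) ≤
        LinearMap.ker (b : H →ₗ[ℂ] H) ⊓ LinearMap.ker (c : H →ₗ[ℂ] H) ↔ b = c) ∧
      (b = c → LinearMap.ker (p : H →ₗ[ℂ] H) = LinearMap.ker (b : H →ₗ[ℂ] H) ∧
        LinearMap.ker (b : H →ₗ[ℂ] H) = LinearMap.ker (c : H →ₗ[ℂ] H)) := by
  have kers_of_eq (h : b = c) : p.ker = b.ker ∧ b.ker = c.ker := by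
    subst h
    exact ⟨hcb ▸ ker_adjoint_comp_self b, rfl⟩
  refine ⟨⟨eq_of_adjoint_comp_eq_of_ker_le hpidem hcb hnorm, fun h => ?_⟩, kers_of_eq⟩
  obtain ⟨hpb, hbc⟩ := kers_of_eq h
  exact le_inf hpb.le (hpb.trans hbc).le

/-- If `p` is an orthogonal projection, `c* ∘ b = p` and `‖b + c‖ ≤ 2`, then
`ker p ⊆ ker b ∩ ker c` iff `b = c`, and in that case `ker p = ker b = ker c`. -/
theorem stmt_1 {H : Type*} [NormedAddCommGroup H] [InnerProductSpace ℂ H] [CompleteSpace H]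
    (p b c : H →L[ℂ] H)
    (hpsa : ContinuousLinearMap.adjoint p = p) (hpidem : p ∘L p = p)
    (hcb : (ContinuousLinearMap.adjoint c) ∘L b = p)
    (hnorm : ‖b + c‖ ≤ 2) :
    (LinearMap.ker (p : H →ₗ[ℂ] H) ≤
        LinearMap.ker (b : H →ₗ[ℂ] H) ⊓ LinearMap.ker (c : H →ₗ[ℂ] H) ↔ b = c) ∧
      (b = c → LinearMap.ker (p : H →ₗ[ℂ] H) = LinearMap.ker (b : H →ₗ[ℂ] H) ∧
        LinearMap.ker (b : H →ₗ[ℂ] H) = LinearMap.ker (c : H →ₗ[ℂ] H)) :=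
  stmt_1_general p b c hpidem hcb hnorm
end

section
/- Let A be a finite-dimensional complex normed algebra possessing a bounded approximate quasi-identity, i.e., a net (e_α) with sup_α ‖e_α‖ < ∞ such that for every a ∈ A the net e_α a + a e_α − e_α a e_α converges in norm to a. Then A has a quasi-identity: there exists e ∈ A with a = e a + a e − e a e for all a ∈ A. -/
/-- A finite-dimensional complex normed algebra with a bounded approximate
quasi-identity has a quasi-identity. -/
theorem stmt_3 {A : Type*} [NonUnitalNormedRing A] [NormedSpace ℂ A]
    [IsScalarTower ℂ A A] [SMulCommClass ℂ A A] [FiniteDimensional ℂ A]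
    {ι : Type*} [Nonempty ι] [Preorder ι] [IsDirected ι (· ≤ ·)]
    (e : ι → A) (hbdd : ∃ C : ℝ, ∀ i, ‖e i‖ ≤ C)
    (he : ∀ a : A, Filter.Tendsto (fun i => e i * a + a * e i - e i * a * e i)
      Filter.atTop (nhds a)) :
    ∃ q : A, ∀ a : A, a = q * a + a * q - q * a * q := by
  obtain ⟨C, hC⟩ := hbdd
  have hne : (Filter.atTop : Filter ι).NeBot := Filter.atTop_neBot_iff.mpr ⟨‹_›, ‹_›⟩
  have hcomp : IsCompact (Metric.closedBall (0 : A) C) :=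
    isCompact_closedBall 0 C
  have hmem : Filter.map e Filter.atTop ≤ Filter.principal (Metric.closedBall (0 : A) C) := by
    rw [Filter.le_principal_iff, Filter.mem_map]
    exact Filter.Eventually.of_forall fun i => by
      simp only [Set.mem_preimage, Metric.mem_closedBall, dist_zero_right]
      exact hC i
  obtain ⟨q, -, hq⟩ := hcomp.exists_clusterPt hmem
  refine ⟨q, fun a => ?_⟩
  have hcont : ContinuousAt (fun x : A => x * a + a * x - x * a * x) q := by
    fun_prop
  have hmapped : ClusterPt (q * a + a * q - q * a * q)
      (Filter.map (fun i => e i * a + a * e i - e i * a * e i) Filter.atTop) := by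
    refine hq.map hcont ?_
    rw [Filter.tendsto_map'_iff]
    exact Filter.tendsto_map
  have hle : Filter.map (fun i => e i * a + a * e i - e i * a * e i) Filter.atTop ≤ nhds a :=
    he a
  have : ClusterPt (q * a + a * q - q * a * q) (nhds a) :=
    hmapped.mono hle
  exact (eq_of_nhds_neBot this).symm
end

section
/- Let A be a (not necessarily unital) complex normed algebra and let e ∈ A be a contractive quasi-identity, i.e., ‖e‖ ≤ 1 and a = e a + a e − e a e for all a ∈ A. Then e is an idempotent (e e = e); consequently ‖e‖ is either 0 or 1. -/
/-!
Put `d = e * e - e`. The quasi-identity relation for `a = e` says `e * d = d`, so left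
multiplication by `e` sends `e + n • d` to `e + (n + 1) • d`, and the orbit of `e` under it is
`e + n • d`. As `‖e‖ ≤ 1` this map does not increase norms, so `‖n • d‖ ≤ 2` for every `n`,
which forces `d = 0`.
-/

def IsQuasiIdentity {R : Type*} [NonUnitalRing R] (e : R) : Prop :=
  ∀ a : R, a = e * a + a * e - e * a * e

theorem IsQuasiIdentity.mul_mul_self_sub_self {R : Type*} [NonUnitalRing R] {e : R}
    (he : IsQuasiIdentity e) : e * (e * e - e) = e * e - e := by
  rw [mul_sub, ← mul_assoc, sub_eq_sub_iff_add_eq_add, add_comm]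
  exact eq_sub_iff_add_eq.mp (he e)

theorem mul_left_iterate_eq_add_nsmul {R : Type*} [NonUnitalRing R] {e : R}
    (h : e * (e * e - e) = e * e - e) (n : ℕ) :
    (e * ·)^[n] e = e + n • (e * e - e) := by
  induction n with
  | zero => simp
  | succ n ih =>
    rw [Function.iterate_succ_apply', ih, mul_add, mul_smul_comm, h, succ_nsmul]
    abel

theorem norm_mul_left_iterate_le {R : Type*} [NonUnitalSeminormedRing R] {e : R}
    (he : ‖e‖ ≤ 1) (n : ℕ) (x : R) : ‖(e * ·)^[n] x‖ ≤ ‖x‖ := by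
  induction n with
  | zero => rfl
  | succ n ih =>
    rw [Function.iterate_succ_apply']
    calc ‖e * (e * ·)^[n] x‖ ≤ ‖e‖ * ‖(e * ·)^[n] x‖ := norm_mul_le _ _
      _ ≤ 1 * ‖x‖ := mul_le_mul he ih (norm_nonneg _) zero_le_one
      _ = ‖x‖ := one_mul _

theorem eq_zero_of_forall_norm_nsmul_le (𝕜 : Type*) {E : Type*} [RCLike 𝕜]
    [NormedAddCommGroup E] [NormedSpace 𝕜 E] {x : E} {C : ℝ}
    (h : ∀ n : ℕ, ‖n • x‖ ≤ C) : x = 0 := by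
  by_contra hx
  have hpos : 0 < ‖x‖ := norm_pos_iff.mpr hx
  obtain ⟨n, hn⟩ := exists_nat_gt (C / ‖x‖)
  have hC := h n
  rw [RCLike.norm_nsmul 𝕜, nsmul_eq_mul] at hC
  exact (div_lt_iff₀ hpos).mp hn |>.not_ge hC

theorem IsIdempotentElem.norm_eq_zero_or_one {R : Type*} [NonUnitalSeminormedRing R] {p : R}
    (hp : IsIdempotentElem p) (h : ‖p‖ ≤ 1) : ‖p‖ = 0 ∨ ‖p‖ = 1 := by
  have hsq : ‖p‖ ≤ ‖p‖ * ‖p‖ := by simpa only [hp.eq] using norm_mul_le p p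
  have hp0 := norm_nonneg p
  have : ‖p‖ * (‖p‖ - 1) = 0 := by nlinarith
  simpa [sub_eq_zero] using this

theorem stmt_5_general {A : Type*} [NonUnitalNormedRing A] [NormedSpace ℂ A]
    (e : A) (hnorm : ‖e‖ ≤ 1) (he : ∀ a : A, a = e * a + a * e - e * a * e) :
    e * e = e ∧ (‖e‖ = 0 ∨ ‖e‖ = 1) := by
  have hd : e * (e * e - e) = e * e - e := IsQuasiIdentity.mul_mul_self_sub_self he
  have hidem : e * e = e := by
    refine sub_eq_zero.mp (eq_zero_of_forall_norm_nsmul_le ℂ (C := 2) fun n => ?_)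
    calc ‖n • (e * e - e)‖ = ‖(e * ·)^[n] e - e‖ := by
          rw [mul_left_iterate_eq_add_nsmul hd, add_sub_cancel_left]
      _ ≤ ‖(e * ·)^[n] e‖ + ‖e‖ := norm_sub_le _ _
      _ ≤ 1 + 1 := add_le_add ((norm_mul_left_iterate_le hnorm n e).trans hnorm) hnorm
      _ = 2 := one_add_one_eq_two
  exact ⟨hidem, IsIdempotentElem.norm_eq_zero_or_one hidem hnorm⟩

/-- A contractive quasi-identity of a (not necessarily unital) complex normed
algebra is an idempotent, and consequently its norm is either `0` or `1`. -/
theorem stmt_5 {A : Type*} [NonUnitalNormedRing A] [NormedSpace ℂ A]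
    [IsScalarTower ℂ A A] [SMulCommClass ℂ A A]
    (e : A) (hnorm : ‖e‖ ≤ 1) (he : ∀ a : A, a = e * a + a * e - e * a * e) :
    e * e = e ∧ (‖e‖ = 0 ∨ ‖e‖ = 1) :=
  stmt_5_general e hnorm he
end

section
/- Let A be a C*-algebra and let J ⊆ A be a norm-closed left ideal (a closed linear subspace with A·J ⊆ J; in particular J is an algebra). Then J possesses a contractive quasi-identity (an e ∈ J with ‖e‖ ≤ 1 and x = e x + x e − e x e for all x ∈ J) if and only if J has a contractive right identity (an f ∈ J with ‖f‖ ≤ 1 and x f = x for all x ∈ J). Moreover, in this case every contractive quasi-identity of J is a contractive right identity of J (and is therefore unique). -/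
open Filter Topology

lemma aux_idem {A : Type*} [NonUnitalNormedRing A] [NormedSpace ℂ A] (e : A) (hn : ‖e‖ ≤ 1)
    (h : e = e * e + e * e - e * e * e) : e * e = e := by
  set f := e * e - e with hf
  have hef : e * f = f := by
    have h3 : e * e * e = e * e + e * e - e := by
      linear_combination (norm := noncomm_ring) h
    calc e * f = e * (e * e) - e * e := by rw [hf]; noncomm_ring
    _ = f := by rw [← mul_assoc, h3, hf]; abel
  set p : ℕ → A := fun n => Nat.rec e (fun _ q => e * q) n with hp
  have hps : ∀ n, p (n + 1) = e * p n := fun n => rfl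
  have hkey : ∀ n, p n = e + n • f := by
    intro n
    induction n with
    | zero => simp [show p 0 = e from rfl]
    | succ n ih =>
      rw [hps, ih, succ_nsmul, mul_add, mul_smul_comm, hef, hf]
      abel
  have hnorm : ∀ n, ‖p n‖ ≤ 1 := by
    intro n
    induction n with
    | zero => exact hn
    | succ n ih =>
      calc ‖p (n+1)‖ = ‖e * p n‖ := by rw [hps]
      _ ≤ ‖e‖ * ‖p n‖ := norm_mul_le _ _
      _ ≤ 1 * 1 := mul_le_mul hn ih (norm_nonneg _) zero_le_one
      _ = 1 := one_mul 1
  have hbound : ∀ n : ℕ, (n : ℝ) * ‖f‖ ≤ 2 := by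
    intro n
    have h1 : ‖(n : ℕ) • f‖ = ‖p n - e‖ := by rw [hkey n]; congr 1; abel
    have h2 : ‖p n - e‖ ≤ 2 := by
      calc ‖p n - e‖ ≤ ‖p n‖ + ‖e‖ := norm_sub_le _ _
      _ ≤ 1 + 1 := add_le_add (hnorm n) hn
      _ = 2 := by norm_num
    calc (n : ℝ) * ‖f‖ = ‖(n : ℕ) • f‖ := by rw [← Nat.cast_smul_eq_nsmul ℂ, norm_smul]; simp
    _ ≤ 2 := h1 ▸ h2
  have hf0 : f = 0 := by
    by_contra hne
    have hpos : 0 < ‖f‖ := norm_pos_iff.mpr hne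
    obtain ⟨n, hn'⟩ := exists_nat_gt (2 / ‖f‖)
    have := hbound n
    have : (n : ℝ) ≤ 2 / ‖f‖ := (le_div_iff₀ hpos).mpr this
    linarith
  have : e * e - e = 0 := hf ▸ hf0
  exact sub_eq_zero.mp this


lemma aux_lim {B : Type*} [CStarAlgebra B] [PartialOrder B] [StarOrderedRing B] (s r : B)
    (h : ∀ t : ℝ, 0 < t → 0 ≤ s + t • r) : 0 ≤ s := by
  have h1 : Tendsto (fun n : ℕ => ((n : ℝ) + 1)⁻¹) atTop (nhds 0) :=
    tendsto_one_div_add_atTop_nhds_zero_nat.congr (by intro n; rw [one_div])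
  have h2 : Tendsto (fun n : ℕ => s + ((n : ℝ) + 1)⁻¹ • r) atTop (nhds s) := by
    have := (h1.smul_const r)
    simpa using tendsto_const_nhds.add this
  exact CStarAlgebra.isClosed_nonneg.mem_of_tendsto h2
    (Eventually.of_forall fun n => h _ (by positivity))

lemma aux_sa_unital {B : Type*} [CStarAlgebra B] [PartialOrder B] [StarOrderedRing B]
    (e : B) (he : e * e = e) (hn : ‖e‖ ≤ 1) : star e = e := by
  have hle1 : star e * e ≤ 1 := by
    rw [← CStarAlgebra.norm_le_one_iff_of_nonneg _ (star_mul_self_nonneg e),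
      CStarRing.norm_star_mul_self]
    nlinarith [norm_nonneg e]
  set q : B := star e * (1 - e) with hq
  set r : B := star (1 - e) * (1 - e) with hrdef
  have hr : 0 ≤ r := star_mul_self_nonneg _
  have key : ∀ z : ℂ, 0 ≤ z • q + star z • (star (1 - e) * e) + (star z * z) • r := by
    intro z
    set g : B := e + z • (1 - e) with hg
    have heg : e * g = e := by
      have h0 : e * (1 - e) = 0 := by rw [mul_sub, mul_one, he, sub_self]
      rw [hg, mul_add, mul_smul_comm, h0, smul_zero, add_zero, he]
    have h1 : star e * e ≤ star g * g := by
      have h2 := star_left_conjugate_le_conjugate hle1 g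
      rw [mul_one] at h2
      calc star e * e = star (e * g) * (e * g) := by rw [heg]
      _ = star g * (star e * e) * g := by rw [star_mul]; noncomm_ring
      _ ≤ star g * g := h2
    have hexp : star g * g = star e * e +
        (z • q + star z • (star (1 - e) * e) + (star z * z) • r) := by
      rw [hg, hq, hrdef, star_add, star_smul, add_mul, mul_add, mul_add,
        smul_mul_assoc, smul_mul_assoc, mul_smul_comm, mul_smul_comm, smul_smul]
      abel
    rw [← sub_nonneg] at h1
    rwa [hexp, add_sub_cancel_left] at h1
  have hstarq : star q = star (1 - e) * e := by rw [hq, star_mul, star_star]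
  -- four directional positivity facts
  have kdir : ∀ w : ℂ, star w * w = 1 → 0 ≤ w • q + star w • star q := by
    intro w hw
    apply aux_lim
    intro t ht
    have := key ((t : ℂ) * w)
    rw [star_mul, ← hstarq] at this
    have harr : ((t:ℂ) * w) • q + (star w * star (t:ℂ)) • star q +
        ((star w * star (t:ℂ)) * ((t:ℂ)*w)) • r
        = t • (w • q + star w • star q + t • r) := by
      rw [Complex.star_def] at hw
      simp only [smul_add, ← Complex.coe_smul, Complex.star_def, Complex.conj_ofReal]
      match_scalars
      · ring
      · ring
      · linear_combination ((t:ℂ)*(t:ℂ)) * hw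
    rw [harr] at this
    have h3 := smul_nonneg (le_of_lt (inv_pos.mpr ht)) this
    rwa [smul_smul, inv_mul_cancel₀ (ne_of_gt ht), one_smul] at h3
  have k1 : 0 ≤ q + star q := by simpa using kdir 1 (by simp)
  have k2 : q + star q ≤ 0 := by
    have h := kdir (-1) (by simp)
    have heq : (-1 : ℂ) • q + star (-1 : ℂ) • star q = -(q + star q) := by
      simp only [star_neg, star_one]
      module
    exact neg_nonneg.mp (heq ▸ h)
  have k3 : 0 ≤ Complex.I • q + (-Complex.I) • star q := by
    have h := kdir Complex.I (by simp [Complex.star_def, Complex.conj_I])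
    have heq : Complex.I • q + star Complex.I • star q
        = Complex.I • q + (-Complex.I) • star q := by
      rw [Complex.star_def, Complex.conj_I]
    exact heq ▸ h
  have k4 : Complex.I • q + (-Complex.I) • star q ≤ 0 := by
    have h := kdir (-Complex.I) (by simp [Complex.star_def, Complex.conj_I])
    have heq : (-Complex.I) • q + star (-Complex.I) • star q
        = -(Complex.I • q + (-Complex.I) • star q) := by
      rw [star_neg, Complex.star_def, Complex.conj_I, neg_neg]
      module
    exact neg_nonneg.mp (heq ▸ h)
  have hqeq : q = star q := by
    have h0 : Complex.I • q + (-Complex.I) • star q = 0 := le_antisymm k4 k3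
    have h1 : Complex.I • (q - star q) = 0 := by
      linear_combination (norm := module) h0
    have h2 : q - star q = 0 := by
      have h3 := congrArg (fun x => (-Complex.I) • x) h1
      simpa [smul_smul, neg_mul, Complex.I_mul_I] using h3
    exact sub_eq_zero.mp h2
  have hq0 : q = 0 := by
    have hsum : q + star q = 0 := le_antisymm k2 k1
    rw [← hqeq] at hsum
    have h5 : (2:ℂ) • q = 0 := by rw [two_smul]; exact hsum
    have h6 := congrArg (fun x => ((2:ℂ))⁻¹ • x) h5
    simpa [smul_smul] using h6
  have hse : star e = star e * e := by
    have h : star e * (1 - e) = 0 := hq ▸ hq0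
    rw [mul_sub, mul_one, sub_eq_zero] at h
    exact h
  calc star e = star e * e := hse
  _ = star (star e * e) := by rw [star_mul, star_star, ← hse]
  _ = star (star e) := by rw [← hse]
  _ = e := star_star e

lemma aux_sa {A : Type*} [NonUnitalCStarAlgebra A] (e : A) (he : e * e = e) (hn : ‖e‖ ≤ 1) :
    star e = e := by
  letI := CStarAlgebra.spectralOrder (Unitization ℂ A)
  letI : StarOrderedRing (Unitization ℂ A) := CStarAlgebra.spectralOrderedRing _
  have h1 : star (e : Unitization ℂ A) = (e : Unitization ℂ A) := by
    apply aux_sa_unital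
    · rw [← Unitization.inr_mul, he]
    · rw [Unitization.norm_inr]; exact hn
  rw [← Unitization.inr_star] at h1
  exact Unitization.inr_injective h1

/-- A norm-closed left ideal `J` in a C*-algebra has a contractive quasi-identity
iff it has a contractive right identity; moreover every contractive
quasi-identity of `J` is a contractive right identity (and is therefore unique). -/
theorem stmt_8 {A : Type*} [NonUnitalNormedRing A] [StarRing A] [CStarRing A]
    [CompleteSpace A] [NormedSpace ℂ A] [IsScalarTower ℂ A A] [SMulCommClass ℂ A A]
    [StarModule ℂ A]
    (J : Submodule ℂ A) (hJclosed : IsClosed (J : Set A))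
    (hJideal : ∀ a : A, ∀ x ∈ J, a * x ∈ J) :
    ((∃ e ∈ J, ‖e‖ ≤ 1 ∧ ∀ x ∈ J, x = e * x + x * e - e * x * e) ↔
      (∃ f ∈ J, ‖f‖ ≤ 1 ∧ ∀ x ∈ J, x * f = x)) ∧
    (∀ e ∈ J, ‖e‖ ≤ 1 → (∀ x ∈ J, x = e * x + x * e - e * x * e) →
      ((∀ x ∈ J, x * e = x) ∧
        ∀ e' ∈ J, ‖e'‖ ≤ 1 → (∀ x ∈ J, x = e' * x + x * e' - e' * x * e') → e' = e)) := by
  letI : NonUnitalCStarAlgebra A := { }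
  have core : ∀ e ∈ J, ‖e‖ ≤ 1 → (∀ x ∈ J, x = e * x + x * e - e * x * e) →
      ∀ x ∈ J, x * e = x := by
    intro e heJ hen hq x hx
    have hidem : e * e = e := aux_idem e hen (hq e heJ)
    have hsa : star e = e := aux_sa e hidem hen
    set y := x - x * e with hy
    have hyJ : y ∈ J := J.sub_mem hx (hJideal x e heJ)
    have hey : e * y = y := by
      rw [hy]
      linear_combination (norm := noncomm_ring) -(hq x hx)
    have hye : y * e = 0 := by
      have h1 : y * e = x * e - x * (e * e) := by rw [hy]; noncomm_ring
      rw [h1, hidem, sub_self]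
    set z := star y * y with hz
    have hzJ : z ∈ J := hJideal (star y) y hyJ
    have hze : z * e = 0 := by rw [hz, mul_assoc, hye, mul_zero]
    have hzstar : star z = z := by rw [hz, star_mul, star_star]
    have hez : e * z = z := by
      have hqz := hq z hzJ
      have h2 : e * z * e = 0 := by rw [mul_assoc, hze, mul_zero]
      rw [hze, h2] at hqz
      simpa using hqz.symm
    have hz0 : z = 0 := by
      have h3 : z = z * e := by
        conv_lhs => rw [← hzstar, ← hez, star_mul, hzstar, hsa]
      rw [hze] at h3
      exact h3
    have hy0 : y = 0 := by
      have h4 : ‖y‖ * ‖y‖ = 0 := by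
        rw [← CStarRing.norm_star_mul_self, ← hz, hz0, norm_zero]
      exact norm_eq_zero.mp (mul_self_eq_zero.mp h4)
    have h5 : x - x * e = 0 := hy ▸ hy0
    rw [sub_eq_zero] at h5
    exact h5.symm
  constructor
  · constructor
    · rintro ⟨e, heJ, hen, hq⟩
      exact ⟨e, heJ, hen, core e heJ hen hq⟩
    · rintro ⟨f, hfJ, hfn, hf⟩
      refine ⟨f, hfJ, hfn, fun x hx => ?_⟩
      rw [show f * x * f = f * x from hf (f * x) (hJideal f x hx), hf x hx]
      abel
  · intro e heJ hen hq
    have he : ∀ x ∈ J, x * e = x := core e heJ hen hq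
    refine ⟨he, ?_⟩
    intro e' he'J hen' hq'
    have he' : ∀ x ∈ J, x * e' = x := core e' he'J hen' hq'
    have hidem : e * e = e := aux_idem e hen (hq e heJ)
    have hidem' : e' * e' = e' := aux_idem e' hen' (hq' e' he'J)
    have hsa : star e = e := aux_sa e hidem hen
    have hsa' : star e' = e' := aux_sa e' hidem' hen'
    calc e' = star e' := hsa'.symm
    _ = star (e' * e) := by rw [he e' he'J]
    _ = star e * star e' := star_mul _ _
    _ = e * e' := by rw [hsa, hsa']
    _ = e := he' e heJ
end

section
/- Let H₁ and H₂ be complex Hilbert spaces, let X ⊆ B(H₂, H₁) be a norm-closed linear subspace, and let z ∈ B(H₁, H₂) satisfy z* ∘ z = 1_{H₁} and z ∘ z* = 1_{H₂} (i.e., z is a unitary from H₁ onto H₂). Assume that x ∘ z ∘ y ∈ X for all x, y ∈ X, and that {x ∘ z : x ∈ X} = {z* ∘ x* : x ∈ X} as subsets of B(H₁). Then: (a) z* ∘ x* ∘ z* ∈ X for every x ∈ X; (b) equipping X with the product x ⋆ y := x ∘ z ∘ y and the involution x^♯ := z* ∘ x* ∘ z*, one obtains a C*-algebra; explicitly, ⋆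 is an associative bilinear product on X with ‖x ⋆ y‖ ≤ ‖x‖·‖y‖, ♯ is a conjugate-linear map on X with (x^♯)^♯ = x and (x ⋆ y)^♯ = y^♯ ⋆ x^♯, and the C*-identity ‖x^♯ ⋆ x‖ = ‖x‖² holds for all x, y ∈ X. -/
/-!
Since `z` is unitary, composing with `z` or `z*` preserves operator norms, so `‖x ⋆ y‖ ≤ ‖x‖‖y‖`
and `x^♯ ⋆ x = z* ∘ (x* ∘ x)` has norm `‖x* ∘ x‖ = ‖x‖²` by the C*-identity of `B(H₂, H₁)`.
The algebraic identities are computations in which `z ∘ z*` and `z* ∘ z` cancel. Finally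
`x^♯ ∈ X`: the hypothesis `X ∘ z = z* ∘ X*` gives `y ∈ X` with `z* ∘ x* = y ∘ z`, whence
`x^♯ = y ∘ z ∘ z* = y`.
-/

/-- The product `x ⋆ y := x ∘ z ∘ y` on operators `H₂ → H₁` induced by a
quasi-multiplier `z : H₁ → H₂`. -/
noncomputable def qMul {H₁ H₂ : Type*} [NormedAddCommGroup H₁] [InnerProductSpace ℂ H₁]
    [NormedAddCommGroup H₂] [InnerProductSpace ℂ H₂]
    (z : H₁ →L[ℂ] H₂) (x y : H₂ →L[ℂ] H₁) : H₂ →L[ℂ] H₁ :=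
  x ∘L (z ∘L y)

/-- The involution `x^♯ := z* ∘ x* ∘ z*` on operators `H₂ → H₁` induced by a
quasi-multiplier `z : H₁ → H₂`. -/
noncomputable def qStar {H₁ H₂ : Type*} [NormedAddCommGroup H₁] [InnerProductSpace ℂ H₁]
    [CompleteSpace H₁] [NormedAddCommGroup H₂] [InnerProductSpace ℂ H₂] [CompleteSpace H₂]
    (z : H₁ →L[ℂ] H₂) (x : H₂ →L[ℂ] H₁) : H₂ →L[ℂ] H₁ :=
  (ContinuousLinearMap.adjoint z) ∘L
    ((ContinuousLinearMap.adjoint x) ∘L (ContinuousLinearMap.adjoint z))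

open ContinuousLinearMap

theorem ContinuousLinearMap.norm_comp_of_adjoint_comp_self {𝕜 E H K : Type*} [RCLike 𝕜]
    [SeminormedAddCommGroup E] [NormedSpace 𝕜 E]
    [NormedAddCommGroup H] [InnerProductSpace 𝕜 H] [CompleteSpace H]
    [NormedAddCommGroup K] [InnerProductSpace 𝕜 K] [CompleteSpace K]
    {u : H →L[𝕜] K} (hu : adjoint u ∘L u = 1) (a : E →L[𝕜] H) : ‖u ∘L a‖ = ‖a‖ :=
  (u ∘L a).opNorm_ext a fun x => u.norm_map_iff_adjoint_comp_self.mpr hu (a x)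

section QuasiMultiplier

variable {H₁ H₂ : Type*} [NormedAddCommGroup H₁] [InnerProductSpace ℂ H₁]
  [NormedAddCommGroup H₂] [InnerProductSpace ℂ H₂] (z : H₁ →L[ℂ] H₂)

theorem qMul_assoc (x y w : H₂ →L[ℂ] H₁) :
    qMul z (qMul z x y) w = qMul z x (qMul z y w) := by
  simp only [qMul, comp_assoc]

theorem qMul_add_left (x y w : H₂ →L[ℂ] H₁) :
    qMul z (x + y) w = qMul z x w + qMul z y w :=
  add_comp x y _

theorem qMul_add_right (x y w : H₂ →L[ℂ] H₁) :
    qMul z x (y + w) = qMul z x y + qMul z x w := by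
  simp only [qMul, comp_add]

theorem qMul_smul_left (c : ℂ) (x y : H₂ →L[ℂ] H₁) :
    qMul z (c • x) y = c • qMul z x y :=
  smul_comp c x _

theorem qMul_smul_right (c : ℂ) (x y : H₂ →L[ℂ] H₁) :
    qMul z x (c • y) = c • qMul z x y := by
  simp only [qMul, comp_smul]

variable [CompleteSpace H₁] [CompleteSpace H₂]

theorem norm_qMul_le (hz1 : adjoint z ∘L z = 1) (x y : H₂ →L[ℂ] H₁) :
    ‖qMul z x y‖ ≤ ‖x‖ * ‖y‖ :=
  calc ‖x ∘L (z ∘L y)‖ ≤ ‖x‖ * ‖z ∘L y‖ := opNorm_comp_le _ _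
    _ = ‖x‖ * ‖y‖ := by rw [norm_comp_of_adjoint_comp_self hz1]

theorem qStar_add (x y : H₂ →L[ℂ] H₁) : qStar z (x + y) = qStar z x + qStar z y := by
  simp only [qStar, map_add, add_comp, comp_add]

theorem qStar_smul (c : ℂ) (x : H₂ →L[ℂ] H₁) :
    qStar z (c • x) = starRingEnd ℂ c • qStar z x := by
  simp only [qStar, map_smulₛₗ, smul_comp, comp_smul]

theorem qStar_qStar (hz1 : adjoint z ∘L z = 1) (hz2 : z ∘L adjoint z = 1)
    (x : H₂ →L[ℂ] H₁) : qStar z (qStar z x) = x := by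
  simp only [qStar, adjoint_comp, adjoint_adjoint, comp_assoc, hz2, one_def, comp_id]
  rw [← comp_assoc, hz1, one_def, id_comp]

theorem qStar_qMul (hz2 : z ∘L adjoint z = 1) (x y : H₂ →L[ℂ] H₁) :
    qStar z (qMul z x y) = qMul z (qStar z y) (qStar z x) := by
  simp only [qStar, qMul, adjoint_comp, comp_assoc]
  rw [← comp_assoc z, hz2, one_def, id_comp]

theorem qMul_qStar_self (hz1 : adjoint z ∘L z = 1) (x : H₂ →L[ℂ] H₁) :
    qMul z (qStar z x) x = adjoint z ∘L (adjoint x ∘L x) := by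
  simp only [qStar, qMul, comp_assoc]
  rw [← comp_assoc (adjoint z) z, hz1, one_def, id_comp]

theorem norm_qMul_qStar_self (hz1 : adjoint z ∘L z = 1) (hz2 : z ∘L adjoint z = 1)
    (x : H₂ →L[ℂ] H₁) : ‖qMul z (qStar z x) x‖ = ‖x‖ ^ 2 := by
  have hz2' : adjoint (adjoint z) ∘L adjoint z = 1 := by rwa [adjoint_adjoint]
  rw [qMul_qStar_self z hz1, norm_comp_of_adjoint_comp_self hz2', norm_adjoint_comp_self, sq]

theorem qStar_eq_of_adjoint_comp_eq (hz2 : z ∘L adjoint z = 1) {x y : H₂ →L[ℂ] H₁}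
    (h : adjoint z ∘L adjoint x = y ∘L z) : qStar z x = y := by
  rw [qStar, ← comp_assoc, h, comp_assoc, hz2, one_def, comp_id]

end QuasiMultiplier

theorem stmt_9_general {H₁ H₂ : Type*} [NormedAddCommGroup H₁] [InnerProductSpace ℂ H₁]
    [CompleteSpace H₁] [NormedAddCommGroup H₂] [InnerProductSpace ℂ H₂] [CompleteSpace H₂]
    (X : Submodule ℂ (H₂ →L[ℂ] H₁))
    (z : H₁ →L[ℂ] H₂)
    (hz1 : (ContinuousLinearMap.adjoint z) ∘L z = 1)
    (hz2 : z ∘L (ContinuousLinearMap.adjoint z) = 1)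
    (hsets : {w : H₁ →L[ℂ] H₁ | ∃ x ∈ X, w = x ∘L z} =
      {w : H₁ →L[ℂ] H₁ | ∃ x ∈ X,
        w = (ContinuousLinearMap.adjoint z) ∘L (ContinuousLinearMap.adjoint x)}) :
    (∀ x ∈ X, qStar z x ∈ X) ∧
    (∀ x ∈ X, ∀ y ∈ X, ∀ w ∈ X, qMul z (qMul z x y) w = qMul z x (qMul z y w)) ∧
    (∀ x ∈ X, ∀ y ∈ X, ∀ w ∈ X,
      qMul z (x + y) w = qMul z x w + qMul z y w ∧
      qMul z x (y + w) = qMul z x y + qMul z x w) ∧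
    (∀ c : ℂ, ∀ x ∈ X, ∀ y ∈ X,
      qMul z (c • x) y = c • qMul z x y ∧ qMul z x (c • y) = c • qMul z x y) ∧
    (∀ x ∈ X, ∀ y ∈ X, ‖qMul z x y‖ ≤ ‖x‖ * ‖y‖) ∧
    (∀ x ∈ X, ∀ y ∈ X, qStar z (x + y) = qStar z x + qStar z y) ∧
    (∀ c : ℂ, ∀ x ∈ X, qStar z (c • x) = (starRingEnd ℂ c) • qStar z x) ∧
    (∀ x ∈ X, qStar z (qStar z x) = x) ∧
    (∀ x ∈ X, ∀ y ∈ X, qStar z (qMul z x y) = qMul z (qStar z y) (qStar z x)) ∧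
    (∀ x ∈ X, ‖qMul z (qStar z x) x‖ = ‖x‖ ^ 2) := by
  have qStar_mem : ∀ x ∈ X, qStar z x ∈ X := by
    intro x hx
    obtain ⟨y, hy, h⟩ := hsets.ge ⟨x, hx, rfl⟩
    rwa [qStar_eq_of_adjoint_comp_eq z hz2 h]
  exact ⟨qStar_mem,
    fun x _ y _ w _ => qMul_assoc z x y w,
    fun x _ y _ w _ => ⟨qMul_add_left z x y w, qMul_add_right z x y w⟩,
    fun c x _ y _ => ⟨qMul_smul_left z c x y, qMul_smul_right z c x y⟩,
    fun x _ y _ => norm_qMul_le z hz1 x y,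
    fun x _ y _ => qStar_add z x y,
    fun c x _ => qStar_smul z c x,
    fun x _ => qStar_qStar z hz1 hz2 x,
    fun x _ y _ => qStar_qMul z hz2 x y,
    fun x _ => norm_qMul_qStar_self z hz1 hz2 x⟩

/-- If `z` is a unitary `H₁ → H₂`, `X ∘ z ∘ X ⊆ X` and `X ∘ z = z* ∘ X*`, then
`X` with the product `x ⋆ y = x ∘ z ∘ y` and involution `x^♯ = z* ∘ x* ∘ z*` is a
C*-algebra: `♯` maps `X` to `X`, `⋆` is an associative bilinear submultiplicative
product, `♯` is a conjugate-linear involution which is anti-multiplicative, and the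
C*-identity `‖x^♯ ⋆ x‖ = ‖x‖²` holds. -/
theorem stmt_9 {H₁ H₂ : Type*} [NormedAddCommGroup H₁] [InnerProductSpace ℂ H₁]
    [CompleteSpace H₁] [NormedAddCommGroup H₂] [InnerProductSpace ℂ H₂] [CompleteSpace H₂]
    (X : Submodule ℂ (H₂ →L[ℂ] H₁)) (hXclosed : IsClosed (X : Set (H₂ →L[ℂ] H₁)))
    (z : H₁ →L[ℂ] H₂)
    (hz1 : (ContinuousLinearMap.adjoint z) ∘L z = 1)
    (hz2 : z ∘L (ContinuousLinearMap.adjoint z) = 1)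
    (hmul : ∀ x ∈ X, ∀ y ∈ X, qMul z x y ∈ X)
    (hsets : {w : H₁ →L[ℂ] H₁ | ∃ x ∈ X, w = x ∘L z} =
      {w : H₁ →L[ℂ] H₁ | ∃ x ∈ X,
        w = (ContinuousLinearMap.adjoint z) ∘L (ContinuousLinearMap.adjoint x)}) :
    (∀ x ∈ X, qStar z x ∈ X) ∧
    (∀ x ∈ X, ∀ y ∈ X, ∀ w ∈ X, qMul z (qMul z x y) w = qMul z x (qMul z y w)) ∧
    (∀ x ∈ X, ∀ y ∈ X, ∀ w ∈ X,
      qMul z (x + y) w = qMul z x w + qMul z y w ∧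
      qMul z x (y + w) = qMul z x y + qMul z x w) ∧
    (∀ c : ℂ, ∀ x ∈ X, ∀ y ∈ X,
      qMul z (c • x) y = c • qMul z x y ∧ qMul z x (c • y) = c • qMul z x y) ∧
    (∀ x ∈ X, ∀ y ∈ X, ‖qMul z x y‖ ≤ ‖x‖ * ‖y‖) ∧
    (∀ x ∈ X, ∀ y ∈ X, qStar z (x + y) = qStar z x + qStar z y) ∧
    (∀ c : ℂ, ∀ x ∈ X, qStar z (c • x) = (starRingEnd ℂ c) • qStar z x) ∧
    (∀ x ∈ X, qStar z (qStar z x) = x) ∧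
    (∀ x ∈ X, ∀ y ∈ X, qStar z (qMul z x y) = qMul z (qStar z y) (qStar z x)) ∧
    (∀ x ∈ X, ‖qMul z (qStar z x) x‖ = ‖x‖ ^ 2) :=
  stmt_9_general X z hz1 hz2 hsets
end

section
/- Let H₁ and H₂ be complex Hilbert spaces, let X ⊆ B(H₂, H₁) be a norm-closed linear subspace, and let z ∈ B(H₁, H₂) with ‖z‖ ≤ 1 and z ∘ z* = 1_{H₂}. Assume: (i) x ∘ z ∘ y ∈ X for all x, y ∈ X; (ii) x* ∘ y lies in the norm closure of {z ∘ w : w ∈ X} for all x, y ∈ X; and (iii) x ∘ z lies in the norm-closed linear span A of {u ∘ v* : u, v ∈ X} for every x ∈ X. Then: X is a ternary ring of operators, i.e., x ∘ y* ∘ w ∈ X for all x, y, w ∈ X; A is a C*-subalgebra of B(H₁); the map ψ : x ↦ x ∘ z is a linear isometry from X into A satisfying ψ(x ∘ z ∘ y) = ψ(x) ∘ ψ(y) for all x, y ∈ X; and the range ψ(X) = {x ∘ z : x ∈ X} is a norm-closed left ideal of A (a ∘ ψ(x) ∈ ψ(X) for all a ∈ A, x ∈ X). -/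
/-- If `z : H₁ → H₂` is a contraction with `z ∘ z* = 1`, `X ∘ z ∘ X ⊆ X`,
`X* ∘ X ⊆ closure (z ∘ X)` and `X ∘ z ⊆ A` (the closed linear span of `X ∘ X*`),
then `X` is a TRO, `A` is a C*-subalgebra of `B(H₁)`, and `ψ : x ↦ x ∘ z` is a
multiplicative linear isometry of `X` onto a norm-closed left ideal of `A`. -/
theorem stmt_10 {H₁ H₂ : Type*} [NormedAddCommGroup H₁] [InnerProductSpace ℂ H₁]
    [CompleteSpace H₁] [NormedAddCommGroup H₂] [InnerProductSpace ℂ H₂] [CompleteSpace H₂]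
    (X : Submodule ℂ (H₂ →L[ℂ] H₁)) (hXclosed : IsClosed (X : Set (H₂ →L[ℂ] H₁)))
    (z : H₁ →L[ℂ] H₂) (hznorm : ‖z‖ ≤ 1)
    (hzco : z ∘L (ContinuousLinearMap.adjoint z) = 1)
    (A : Submodule ℂ (H₁ →L[ℂ] H₁))
    (hA : A = (Submodule.span ℂ {a : H₁ →L[ℂ] H₁ | ∃ u ∈ X, ∃ v ∈ X,
      a = u ∘L (ContinuousLinearMap.adjoint v)}).topologicalClosure)
    (h1 : ∀ x ∈ X, ∀ y ∈ X, x ∘L (z ∘L y) ∈ X)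
    (h2 : ∀ x ∈ X, ∀ y ∈ X, (ContinuousLinearMap.adjoint x) ∘L y ∈
      closure {b : H₂ →L[ℂ] H₂ | ∃ w ∈ X, b = z ∘L w})
    (h3 : ∀ x ∈ X, x ∘L z ∈ A) :
    (∀ x ∈ X, ∀ y ∈ X, ∀ w ∈ X, x ∘L ((ContinuousLinearMap.adjoint y) ∘L w) ∈ X) ∧
    (∀ a ∈ A, ∀ b ∈ A, a ∘L b ∈ A) ∧
    (∀ a ∈ A, ContinuousLinearMap.adjoint a ∈ A) ∧
    (∀ x ∈ X, ‖x ∘L z‖ = ‖x‖) ∧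
    (∀ x ∈ X, ∀ y ∈ X, (x ∘L (z ∘L y)) ∘L z = (x ∘L z) ∘L (y ∘L z)) ∧
    IsClosed {a : H₁ →L[ℂ] H₁ | ∃ x ∈ X, a = x ∘L z} ∧
    (∀ a ∈ A, ∀ x ∈ X, ∃ w ∈ X, a ∘L (x ∘L z) = w ∘L z) := by
  set S : Set (H₁ →L[ℂ] H₁) := {a : H₁ →L[ℂ] H₁ | ∃ u ∈ X, ∃ v ∈ X,
      a = u ∘L (ContinuousLinearMap.adjoint v)} with hSdef
  set M : Submodule ℂ (H₁ →L[ℂ] H₁) := Submodule.span ℂ S with hMdef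
  have hAclosed : IsClosed (A : Set (H₁ →L[ℂ] H₁)) := by
    rw [hA]; exact Submodule.isClosed_topologicalClosure M
  have hAmem : ∀ a : H₁ →L[ℂ] H₁, a ∈ closure (M : Set (H₁ →L[ℂ] H₁)) → a ∈ A := by
    intro a ha; rw [hA]
    rwa [← Submodule.topologicalClosure_coe M] at ha
  have hAmem' : ∀ a : H₁ →L[ℂ] H₁, a ∈ A → a ∈ closure (M : Set (H₁ →L[ℂ] H₁)) := by
    intro a ha; rw [hA] at ha
    rwa [← Submodule.topologicalClosure_coe M]
  have hSA : ∀ a ∈ S, a ∈ A := fun a ha => hAmem a (subset_closure (Submodule.subset_span ha))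
  -- z† cancellation
  have hzz : ∀ x : H₂ →L[ℂ] H₁, (x ∘L z) ∘L (ContinuousLinearMap.adjoint z) = x := by
    intro x
    rw [ContinuousLinearMap.comp_assoc, hzco]
    rfl
  -- TRO
  have hTRO : ∀ x ∈ X, ∀ y ∈ X, ∀ w ∈ X,
      x ∘L ((ContinuousLinearMap.adjoint y) ∘L w) ∈ X := by
    intro x hx y hy w hw
    have hc : Continuous fun b : H₂ →L[ℂ] H₂ => x ∘L b :=
      continuous_const.clm_comp continuous_id
    have hmaps : Set.MapsTo (fun b : H₂ →L[ℂ] H₂ => x ∘L b)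
        {b : H₂ →L[ℂ] H₂ | ∃ w ∈ X, b = z ∘L w} (X : Set (H₂ →L[ℂ] H₁)) := by
      rintro b ⟨w', hw', rfl⟩
      exact h1 x hx w' hw'
    have := map_mem_closure hc (h2 y hy w hw) hmaps
    rwa [hXclosed.closure_eq] at this
  -- A ∘ X ⊆ X, first for M
  have hMX : ∀ a ∈ M, ∀ x ∈ X, a ∘L x ∈ X := by
    intro a ha
    induction ha using Submodule.span_induction with
    | mem a haS =>
      obtain ⟨u, hu, v, hv, rfl⟩ := haS
      intro x hx
      have hc : Continuous fun b : H₂ →L[ℂ] H₂ => u ∘L b :=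
        continuous_const.clm_comp continuous_id
      have hmaps : Set.MapsTo (fun b : H₂ →L[ℂ] H₂ => u ∘L b)
          {b : H₂ →L[ℂ] H₂ | ∃ w ∈ X, b = z ∘L w} (X : Set (H₂ →L[ℂ] H₁)) := by
        rintro b ⟨w', hw', rfl⟩
        exact h1 u hu w' hw'
      have := map_mem_closure hc (h2 v hv x hx) hmaps
      rw [hXclosed.closure_eq] at this
      rw [ContinuousLinearMap.comp_assoc]
      exact this
    | zero => intro x hx; rw [ContinuousLinearMap.zero_comp]; exact X.zero_mem
    | add a b _ _ iha ihb =>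
      intro x hx
      rw [ContinuousLinearMap.add_comp]
      exact X.add_mem (iha x hx) (ihb x hx)
    | smul c a _ iha =>
      intro x hx
      rw [ContinuousLinearMap.smul_comp]
      exact X.smul_mem c (iha x hx)
  have hAX : ∀ a ∈ A, ∀ x ∈ X, a ∘L x ∈ X := by
    intro a ha x hx
    have hc : Continuous fun b : H₁ →L[ℂ] H₁ => b ∘L x :=
      continuous_id.clm_comp continuous_const
    have hmaps : Set.MapsTo (fun b : H₁ →L[ℂ] H₁ => b ∘L x)
        (M : Set (H₁ →L[ℂ] H₁)) (X : Set (H₂ →L[ℂ] H₁)) :=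
      fun b hb => hMX b hb x hx
    have := map_mem_closure hc (hAmem' a ha) hmaps
    rwa [hXclosed.closure_eq] at this
  -- multiplication
  have hmulSS : ∀ a ∈ S, ∀ b ∈ S, a ∘L b ∈ A := by
    rintro _ ⟨u, hu, v, hv, rfl⟩ _ ⟨u', hu', v', hv', rfl⟩
    have hc : Continuous fun c : H₂ →L[ℂ] H₂ =>
        (u ∘L c) ∘L (ContinuousLinearMap.adjoint v') :=
      (continuous_const.clm_comp continuous_id).clm_comp continuous_const
    have hmaps : Set.MapsTo (fun c : H₂ →L[ℂ] H₂ =>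
        (u ∘L c) ∘L (ContinuousLinearMap.adjoint v'))
        {b : H₂ →L[ℂ] H₂ | ∃ w ∈ X, b = z ∘L w} (A : Set (H₁ →L[ℂ] H₁)) := by
      rintro c ⟨w', hw', rfl⟩
      exact hSA _ ⟨u ∘L (z ∘L w'), h1 u hu w' hw', v', hv', rfl⟩
    have := map_mem_closure hc (h2 v hv u' hu') hmaps
    rw [hAclosed.closure_eq] at this
    simp only [ContinuousLinearMap.comp_assoc] at this ⊢
    exact this
  have hmulMM : ∀ a ∈ M, ∀ b ∈ M, a ∘L b ∈ A := by
    intro a ha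
    induction ha using Submodule.span_induction with
    | mem a haS =>
      intro b hb
      induction hb using Submodule.span_induction with
      | mem b hbS => exact hmulSS a haS b hbS
      | zero => rw [ContinuousLinearMap.comp_zero]; exact A.zero_mem
      | add b c _ _ ihb ihc =>
        rw [ContinuousLinearMap.comp_add]; exact A.add_mem ihb ihc
      | smul c b _ ihb =>
        rw [ContinuousLinearMap.comp_smul]; exact A.smul_mem c ihb
    | zero => intro b hb; rw [ContinuousLinearMap.zero_comp]; exact A.zero_mem
    | add a c _ _ iha ihc =>
      intro b hb
      rw [ContinuousLinearMap.add_comp]; exact A.add_mem (iha b hb) (ihc b hb)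
    | smul c a _ iha =>
      intro b hb
      rw [ContinuousLinearMap.smul_comp]; exact A.smul_mem c (iha b hb)
  have hmulMA : ∀ a ∈ M, ∀ b ∈ A, a ∘L b ∈ A := by
    intro a ha b hb
    have hc : Continuous fun c : H₁ →L[ℂ] H₁ => a ∘L c :=
      continuous_const.clm_comp continuous_id
    have hmaps : Set.MapsTo (fun c : H₁ →L[ℂ] H₁ => a ∘L c)
        (M : Set (H₁ →L[ℂ] H₁)) (A : Set (H₁ →L[ℂ] H₁)) :=
      fun c hc' => hmulMM a ha c hc'
    have := map_mem_closure hc (hAmem' b hb) hmaps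
    rwa [hAclosed.closure_eq] at this
  have hmulAA : ∀ a ∈ A, ∀ b ∈ A, a ∘L b ∈ A := by
    intro a ha b hb
    have hc : Continuous fun c : H₁ →L[ℂ] H₁ => c ∘L b :=
      continuous_id.clm_comp continuous_const
    have hmaps : Set.MapsTo (fun c : H₁ →L[ℂ] H₁ => c ∘L b)
        (M : Set (H₁ →L[ℂ] H₁)) (A : Set (H₁ →L[ℂ] H₁)) :=
      fun c hc' => hmulMA c hc' b hb
    have := map_mem_closure hc (hAmem' a ha) hmaps
    rwa [hAclosed.closure_eq] at this
  -- adjoint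
  have hadjM : ∀ a ∈ M, ContinuousLinearMap.adjoint a ∈ M := by
    intro a ha
    induction ha using Submodule.span_induction with
    | mem a haS =>
      obtain ⟨u, hu, v, hv, rfl⟩ := haS
      rw [ContinuousLinearMap.adjoint_comp, ContinuousLinearMap.adjoint_adjoint]
      exact Submodule.subset_span ⟨v, hv, u, hu, rfl⟩
    | zero => rw [map_zero]; exact M.zero_mem
    | add a b _ _ iha ihb => rw [map_add]; exact M.add_mem iha ihb
    | smul c a _ iha =>
      rw [LinearIsometryEquiv.map_smulₛₗ]
      exact M.smul_mem _ iha
  have hadjA : ∀ a ∈ A, ContinuousLinearMap.adjoint a ∈ A := by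
    intro a ha
    have hc : Continuous fun c : H₁ →L[ℂ] H₁ => ContinuousLinearMap.adjoint c :=
      (ContinuousLinearMap.adjoint (E := H₁) (F := H₁) (𝕜 := ℂ)).continuous
    have hmaps : Set.MapsTo (fun c : H₁ →L[ℂ] H₁ => ContinuousLinearMap.adjoint c)
        (M : Set (H₁ →L[ℂ] H₁)) (A : Set (H₁ →L[ℂ] H₁)) :=
      fun c hc' => hAmem _ (subset_closure (hadjM c hc'))
    have := map_mem_closure hc (hAmem' a ha) hmaps
    rwa [hAclosed.closure_eq] at this
  -- isometry
  have hiso : ∀ x : H₂ →L[ℂ] H₁, ‖x ∘L z‖ = ‖x‖ := by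
    intro x
    refine le_antisymm ?_ ?_
    · calc ‖x ∘L z‖ ≤ ‖x‖ * ‖z‖ := ContinuousLinearMap.opNorm_comp_le x z
        _ ≤ ‖x‖ * 1 := by gcongr
        _ = ‖x‖ := mul_one _
    · conv_lhs => rw [← hzz x]
      calc ‖(x ∘L z) ∘L (ContinuousLinearMap.adjoint z)‖
          ≤ ‖x ∘L z‖ * ‖ContinuousLinearMap.adjoint z‖ :=
            ContinuousLinearMap.opNorm_comp_le _ _
        _ ≤ ‖x ∘L z‖ * 1 := by
            gcongr
            rw [ContinuousLinearMap.adjoint.norm_map z]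
            exact hznorm
        _ = ‖x ∘L z‖ := mul_one _
  -- closed range
  have hrange : IsClosed {a : H₁ →L[ℂ] H₁ | ∃ x ∈ X, a = x ∘L z} := by
    have heq : {a : H₁ →L[ℂ] H₁ | ∃ x ∈ X, a = x ∘L z} =
        ((fun a : H₁ →L[ℂ] H₁ => a ∘L (ContinuousLinearMap.adjoint z)) ⁻¹'
          (X : Set (H₂ →L[ℂ] H₁))) ∩
        {a : H₁ →L[ℂ] H₁ | (a ∘L (ContinuousLinearMap.adjoint z)) ∘L z = a} := by
      ext a
      constructor
      · rintro ⟨x, hx, rfl⟩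
        refine ⟨?_, ?_⟩
        · show (x ∘L z) ∘L (ContinuousLinearMap.adjoint z) ∈ (X : Set (H₂ →L[ℂ] H₁))
          rw [hzz x]; exact hx
        · show ((x ∘L z) ∘L (ContinuousLinearMap.adjoint z)) ∘L z = x ∘L z
          rw [hzz x]
      · rintro ⟨ha1, ha2⟩
        exact ⟨a ∘L (ContinuousLinearMap.adjoint z), ha1, ha2.symm⟩
    rw [heq]
    refine IsClosed.inter (hXclosed.preimage ?_) ?_
    · exact continuous_id.clm_comp continuous_const
    · exact isClosed_eq
        ((continuous_id.clm_comp continuous_const).clm_comp continuous_const)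
        continuous_id
  refine ⟨hTRO, hmulAA, hadjA, fun x _ => hiso x, ?_, hrange, ?_⟩
  · intro x _ y _
    simp only [ContinuousLinearMap.comp_assoc]
  · intro a ha x hx
    exact ⟨a ∘L x, hAX a ha x hx, (ContinuousLinearMap.comp_assoc a x z).symm⟩
end

section
/- There exist a complex Hilbert space H, a norm-closed right ideal A of B(H) (a norm-closed linear subspace with a ∘ T ∈ A for all a ∈ A and T ∈ B(H)), and an element a ∈ A with the following properties: (i) A has a contractive approximate left identity, i.e., a sequence (u_n) in A with ‖u_n‖ ≤ 1 for all n and ‖u_n ∘ b − b‖ → 0 for every b ∈ A; and (ii) for every sequence (e_n) in A with ‖e_n‖ ≤ 1 for all n and ‖e_n ∘ b − b‖ → 0 for every b ∈ A, the sequence (a ∘ e_n) does not converge in operator norm. -/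
/-!
On `H = ℓ²(ℕ)` let `a` be the isometry `δₖ ↦ δ₂ₖ`, `c` the weighted shift `δₖ ↦ 2⁻ᵏ δ₂ₖ₊₁`, and
`A` the closure of the right ideal `a B(H) + c B(H)`. The coordinate projections `uₙ` keeping the
even coordinates and the odd ones up to `2n + 1` equal `a a* + c Sₙ` for a truncated inverse `Sₙ`
of `c`, so they lie in `A`; moreover `uₙ a = a` and `‖uₙ c - c‖ ≤ 2⁻⁽ⁿ⁺¹⁾`. Since the `uₙ` are
contractions, `uₙ b → b` spreads from `b ∈ {a, c}` to all of `A`.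

If `a eₙ` converged for some contractive approximate left identity `(eₙ)` of `A`, then so would
`eₙ = a* a eₙ`, to some `E ∈ A` with `E c = c`; such an `E` fixes every `δ₂ₖ₊₁`. But the diagonal
entries `⟪δ₂ₖ₊₁, X δ₂ₖ₊₁⟫` of `X = a s + c t` are `2⁻ᵏ (t δ₂ₖ₊₁)ₖ → 0`, and this property is closed
in norm, hence holds on all of `A`: a contradiction.
-/

open Filter Topology Function
open scoped lp ENNReal NNReal InnerProductSpace

noncomputable section

lemma norm_rpow_extend_zero {E ι κ : Type*} [NormedAddCommGroup E] (g : ι → κ) (x : ι → E)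
    {t : ℝ} (ht : t ≠ 0) :
    (fun j => ‖extend g x 0 j‖ ^ t) = extend g (fun i => ‖x i‖ ^ t) 0 := by
  funext j
  rw [apply_extend (fun z : E => ‖z‖ ^ t)]
  congr 1
  funext j
  simp [Real.zero_rpow ht]

namespace lp

variable {𝕜 : Type*} [RCLike 𝕜] {ι κ : Type*}

section mul

variable (w : ι → 𝕜) {C : ℝ≥0}

lemma norm_mul_apply_le (hw : ∀ i, ‖w i‖ ≤ C) (x : ℓ²(ι, 𝕜)) (i : ι) :
    ‖w i * x i‖ ≤ ‖(((C : ℝ) : 𝕜) • x) i‖ := by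
  rw [lp.coeFn_smul, Pi.smul_apply, smul_eq_mul, norm_mul, norm_mul, RCLike.norm_ofReal,
    NNReal.abs_eq]
  gcongr
  exact hw i

def mulCLM (hw : ∀ i, ‖w i‖ ≤ C) : ℓ²(ι, 𝕜) →L[𝕜] ℓ²(ι, 𝕜) :=
  LinearMap.mkContinuous
    { toFun := fun x => ⟨w * ⇑x, (lp.memℓp _).mono' (norm_mul_apply_le w hw x)⟩
      map_add' := fun x y => lp.ext (mul_add w x y)
      map_smul' := fun c x => lp.ext (mul_left_comm w (fun _ => c) x) }
    C fun x => by
      refine (lp.norm_mono two_ne_zero (norm_mul_apply_le w hw x)).trans_eq ?_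
      rw [lp.norm_const_smul two_ne_zero, RCLike.norm_ofReal, NNReal.abs_eq]

@[simp]
lemma mulCLM_apply (hw : ∀ i, ‖w i‖ ≤ C) (x : ℓ²(ι, 𝕜)) (i : ι) :
    mulCLM w hw x i = w i * x i := rfl

lemma norm_mulCLM_le (hw : ∀ i, ‖w i‖ ≤ C) : ‖mulCLM w hw‖ ≤ C :=
  LinearMap.mkContinuous_norm_le _ C.2 _

end mul

section reindex

variable (g : ι ↪ κ)

lemma memℓp_extend_zero (x : ℓ²(ι, 𝕜)) : Memℓp (extend g x 0) 2 := by
  apply memℓp_gen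
  rw [norm_rpow_extend_zero g x (by norm_num : (2 : ℝ≥0∞).toReal ≠ 0)]
  exact (summable_extend_zero g.injective).2 ((lp.memℓp x).summable (by norm_num))

def extendCLM : ℓ²(ι, 𝕜) →L[𝕜] ℓ²(κ, 𝕜) :=
  LinearMap.mkContinuous
    { toFun := fun x => ⟨extend g x 0, memℓp_extend_zero g x⟩
      map_add' := fun x y => lp.ext (map_add (ExtendByZero.linearMap 𝕜 g) ⇑x ⇑y)
      map_smul' := fun c x => lp.ext (map_smul (ExtendByZero.linearMap 𝕜 g) c ⇑x) }
    1 fun x => by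
      refine lp.norm_le_of_tsum_le (by norm_num) (by positivity) ?_
      simp only [LinearMap.coe_mk, AddHom.coe_mk]
      rw [norm_rpow_extend_zero g x (by norm_num : (2 : ℝ≥0∞).toReal ≠ 0),
        tsum_extend_zero g.injective, one_mul, lp.norm_rpow_eq_tsum (by norm_num)]

lemma extendCLM_apply_apply (x : ℓ²(ι, 𝕜)) (i : ι) : extendCLM g x (g i) = x i :=
  g.injective.extend_apply _ _ _

lemma extendCLM_apply_of_forall_ne (x : ℓ²(ι, 𝕜)) {j : κ} (hj : ∀ i, g i ≠ j) :
    extendCLM g x j = 0 :=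
  extend_apply' _ _ _ fun ⟨i, hi⟩ => hj i hi

lemma norm_extendCLM_le : ‖(extendCLM g : ℓ²(ι, 𝕜) →L[𝕜] ℓ²(κ, 𝕜))‖ ≤ 1 :=
  LinearMap.mkContinuous_norm_le _ zero_le_one _

lemma memℓp_comp (x : ℓ²(κ, 𝕜)) : Memℓp (x ∘ g) 2 :=
  memℓp_gen (((lp.memℓp x).summable (by norm_num)).comp_injective g.injective)

def compCLM : ℓ²(κ, 𝕜) →L[𝕜] ℓ²(ι, 𝕜) :=
  LinearMap.mkContinuous
    { toFun := fun x => ⟨x ∘ g, memℓp_comp g x⟩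
      map_add' := fun x y => rfl
      map_smul' := fun c x => rfl }
    1 fun x => by
      refine lp.norm_le_of_tsum_le (by norm_num) (by positivity) ?_
      rw [one_mul, lp.norm_rpow_eq_tsum (by norm_num)]
      exact tsum_comp_le_tsum_of_inj ((lp.memℓp x).summable (by norm_num))
        (fun _ => by positivity) g.injective

@[simp]
lemma compCLM_apply (x : ℓ²(κ, 𝕜)) (i : ι) : compCLM g x i = x (g i) := rfl

end reindex

end lp

section RightIdeal

variable (𝕜 : Type*) {R : Type*} [NormedField 𝕜] [NormedRing R] [NormedAlgebra 𝕜 R]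

def rightIdealSpan₂ (a c : R) : Submodule 𝕜 R :=
  LinearMap.range ((LinearMap.mulLeft 𝕜 a).coprod (LinearMap.mulLeft 𝕜 c))

variable {𝕜} {a c : R}

lemma mem_rightIdealSpan₂ {x : R} :
    x ∈ rightIdealSpan₂ 𝕜 a c ↔ ∃ s t, a * s + c * t = x := by
  simp [rightIdealSpan₂]

lemma mul_mem_topologicalClosure_rightIdealSpan₂ {x : R}
    (hx : x ∈ (rightIdealSpan₂ 𝕜 a c).topologicalClosure) (t : R) :
    x * t ∈ (rightIdealSpan₂ 𝕜 a c).topologicalClosure := by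
  refine map_mem_closure (f := (· * t)) (continuous_mul_const t) hx fun y hy => ?_
  obtain ⟨s, s', rfl⟩ := mem_rightIdealSpan₂.1 hy
  exact mem_rightIdealSpan₂.2 ⟨s * t, s' * t, by simp only [add_mul, mul_assoc]⟩

lemma isClosed_setOf_tendsto_mul_self {ι : Type*} {l : Filter ι} {u : ι → R} {C : ℝ≥0}
    (hu : ∀ i, ‖u i‖ ≤ C) : IsClosed {b : R | Tendsto (fun i => u i * b) l (𝓝 b)} := by
  refine (LipschitzWith.uniformEquicontinuous _ C fun i => ?_).equicontinuous
    |>.isClosed_setOfPred_tendsto continuous_id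
  refine LipschitzWith.of_dist_le_mul fun x y => ?_
  rw [dist_eq_norm, dist_eq_norm, ← mul_sub]
  exact (norm_mul_le _ _).trans (mul_le_mul_of_nonneg_right (hu i) (norm_nonneg _))

lemma tendsto_mul_self_of_mem_topologicalClosure {ι : Type*} {l : Filter ι} {u : ι → R}
    {C : ℝ≥0} (hu : ∀ i, ‖u i‖ ≤ C) (ha : Tendsto (fun i => u i * a) l (𝓝 a))
    (hc : Tendsto (fun i => u i * c) l (𝓝 c)) {b : R}
    (hb : b ∈ (rightIdealSpan₂ 𝕜 a c).topologicalClosure) :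
    Tendsto (fun i => u i * b) l (𝓝 b) := by
  refine closure_minimal (fun x hx => ?_) (isClosed_setOf_tendsto_mul_self hu) hb
  obtain ⟨s, t, rfl⟩ := mem_rightIdealSpan₂.1 hx
  simp only [Set.mem_ofPred_eq, mul_add, ← mul_assoc]
  exact ((ha.mul_const s).add (hc.mul_const t))

end RightIdeal

lemma exists_mem_mul_eq_of_tendsto_mul {R : Type*} [NormedRing R] {ι : Type*} {l : Filter ι}
    [l.NeBot] {A : Set R} (hA : IsClosed A) {a r c L : R} (hra : r * a = 1) {e : ι → R}
    (he : ∀ i, e i ∈ A) (hc : Tendsto (fun i => e i * c) l (𝓝 c))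
    (hL : Tendsto (fun i => a * e i) l (𝓝 L)) : ∃ E ∈ A, E * c = c := by
  have hE : Tendsto e l (𝓝 (r * L)) := by
    simpa only [← mul_assoc, hra, one_mul] using hL.const_mul r
  exact ⟨r * L, hA.mem_of_tendsto hE (.of_forall he),
    tendsto_nhds_unique (hE.mul_const c) hc⟩

lemma isClosed_setOf_tendsto_inner_map_self {𝕜 E : Type*} [RCLike 𝕜] [NormedAddCommGroup E]
    [InnerProductSpace 𝕜 E] {ι : Type*} {l : Filter ι} {v : ι → E}
    (hv : ∀ i, ‖v i‖ ≤ 1) :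
    IsClosed {T : E →L[𝕜] E | Tendsto (fun i => ⟪v i, T (v i)⟫_𝕜) l (𝓝 0)} := by
  refine (LipschitzWith.uniformEquicontinuous _ 1 fun i => ?_).equicontinuous
    |>.isClosed_setOfPred_tendsto continuous_const
  refine LipschitzWith.of_dist_le_mul fun T T' => ?_
  rw [dist_eq_norm, dist_eq_norm, ← inner_sub_right, ← sub_apply,
    NNReal.coe_one, one_mul]
  calc ‖⟪v i, (T - T') (v i)⟫_𝕜‖ ≤ ‖v i‖ * (‖T - T'‖ * ‖v i‖) :=
        (norm_inner_le_norm _ _).trans (mul_le_mul_of_nonneg_left ((T - T').le_opNorm _)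
          (norm_nonneg _))
    _ ≤ 1 * (‖T - T'‖ * 1) := by gcongr <;> exact hv i
    _ = ‖T - T'‖ := by ring

namespace NonconvergentApproximateIdentity

open lp

abbrev H : Type := ℓ²(ℕ, ℂ)

@[simps]
def evenEmb : ℕ ↪ ℕ := ⟨(2 * ·), fun _ _ h => by simpa using h⟩

@[simps]
def oddEmb : ℕ ↪ ℕ := ⟨(2 * · + 1), fun _ _ h => by simpa using h⟩

lemma ext_even_odd {x y : H} (he : ∀ k, x (2 * k) = y (2 * k))
    (ho : ∀ k, x (2 * k + 1) = y (2 * k + 1)) : x = y :=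
  lp.ext <| funext fun m => by obtain ⟨k, rfl | rfl⟩ := Nat.even_or_odd' m <;> simp [he, ho]

section coordinates

variable (x : H) (k : ℕ)

@[simp] lemma extendCLM_evenEmb_apply_even : extendCLM evenEmb x (2 * k) = x k :=
  extendCLM_apply_apply evenEmb x k

@[simp] lemma extendCLM_evenEmb_apply_odd : extendCLM evenEmb x (2 * k + 1) = 0 :=
  extendCLM_apply_of_forall_ne evenEmb x fun i => by simp; omega

@[simp] lemma extendCLM_oddEmb_apply_even : extendCLM oddEmb x (2 * k) = 0 :=
  extendCLM_apply_of_forall_ne oddEmb x fun i => by simp; omega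

@[simp] lemma extendCLM_oddEmb_apply_odd : extendCLM oddEmb x (2 * k + 1) = x k :=
  extendCLM_apply_apply oddEmb x k

end coordinates

def oddWeightedShift : H →L[ℂ] H :=
  extendCLM oddEmb ∘L mulCLM (fun k => (2⁻¹ : ℂ) ^ k) (C := 1) fun k => by
    simpa using inv_le_one_of_one_le₀ (one_le_pow₀ (one_le_two (α := ℝ)))

def oddTruncatedInverse (n : ℕ) : H →L[ℂ] H :=
  mulCLM (fun k => if k ≤ n then (2 : ℂ) ^ k else 0) (C := 2 ^ n)
      (fun k => by split_ifs with hk <;> simp [pow_le_pow_right₀, hk]) ∘L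
    compCLM oddEmb

-- the projection onto the even coordinates and the odd coordinates up to `2 * n + 1`
def approxUnit (n : ℕ) : H →L[ℂ] H :=
  extendCLM evenEmb * compCLM evenEmb + oddWeightedShift * oddTruncatedInverse n

def oddTail (n : ℕ) : H →L[ℂ] H :=
  extendCLM oddEmb ∘L
    mulCLM (fun k => if k ≤ n then 0 else -(2⁻¹ : ℂ) ^ k) (C := 2⁻¹ ^ (n + 1)) fun k => by
      split_ifs with hk
      · simp
      · simpa using pow_le_pow_of_le_one (by norm_num : (0 : ℝ) ≤ 2⁻¹) (by norm_num)
          (by omega : n + 1 ≤ k)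

lemma approxUnit_apply_odd (n : ℕ) (x : H) (k : ℕ) :
    approxUnit n x (2 * k + 1) = if k ≤ n then x (2 * k + 1) else 0 := by
  split_ifs with hk <;> simp [approxUnit, oddWeightedShift, oddTruncatedInverse, hk]

lemma compCLM_evenEmb_mul_extendCLM_evenEmb :
    (compCLM evenEmb * extendCLM evenEmb : H →L[ℂ] H) = 1 :=
  ContinuousLinearMap.ext fun x => lp.ext <| funext fun k => by simp

lemma approxUnit_mul_extendCLM_evenEmb (n : ℕ) :
    approxUnit n * extendCLM evenEmb = extendCLM evenEmb :=
  ContinuousLinearMap.ext fun x => ext_even_odd (fun k => by simp [approxUnit, oddWeightedShift])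
    fun k => by simp [approxUnit_apply_odd]

lemma norm_approxUnit_le (n : ℕ) : ‖approxUnit n‖ ≤ 1 := by
  refine ContinuousLinearMap.opNorm_le_bound _ zero_le_one fun x => ?_
  rw [one_mul]
  refine lp.norm_mono two_ne_zero fun m => ?_
  obtain ⟨k, rfl | rfl⟩ := Nat.even_or_odd' m
  · simp [approxUnit, oddWeightedShift]
  · rw [approxUnit_apply_odd]
    split_ifs <;> simp

lemma approxUnit_mul_oddWeightedShift_sub (n : ℕ) :
    approxUnit n * oddWeightedShift - oddWeightedShift = oddTail n := by
  refine ContinuousLinearMap.ext fun x => ext_even_odd (fun k => ?_) fun k => ?_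
  · simp [oddTail, oddWeightedShift, approxUnit]
  · simp only [sub_apply, mul_apply_eq_comp, lp.coeFn_sub,
      Pi.sub_apply, approxUnit_apply_odd]
    split_ifs with hk <;> simp [oddTail, oddWeightedShift, hk]

lemma tendsto_approxUnit_mul_oddWeightedShift :
    Tendsto (fun n => approxUnit n * oddWeightedShift) atTop (𝓝 oddWeightedShift) := by
  rw [tendsto_iff_norm_sub_tendsto_zero]
  refine squeeze_zero (fun n => norm_nonneg _) (fun n => ?_)
    ((tendsto_pow_atTop_nhds_zero_of_lt_one (by norm_num) (by norm_num : (2⁻¹ : ℝ) < 1)).comp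
      (tendsto_add_atTop_nat 1))
  rw [approxUnit_mul_oddWeightedShift_sub]
  calc ‖oddTail n‖ ≤ 1 * (2⁻¹ ^ (n + 1) : ℝ≥0) :=
        (ContinuousLinearMap.opNorm_comp_le _ _).trans
          (mul_le_mul (norm_extendCLM_le _) (norm_mulCLM_le _ _) (norm_nonneg _) zero_le_one)
    _ = (2⁻¹ : ℝ) ^ (n + 1) := by simp

def closedRightIdeal : Submodule ℂ (H →L[ℂ] H) :=
  (rightIdealSpan₂ ℂ (extendCLM evenEmb) oddWeightedShift).topologicalClosure

lemma approxUnit_mem (n : ℕ) : approxUnit n ∈ closedRightIdeal :=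
  Submodule.le_topologicalClosure _ (mem_rightIdealSpan₂.2 ⟨_, _, rfl⟩)

lemma oddWeightedShift_mem : oddWeightedShift ∈ closedRightIdeal :=
  Submodule.le_topologicalClosure _ (mem_rightIdealSpan₂.2 ⟨0, 1, by simp⟩)

lemma extendCLM_evenEmb_mem : extendCLM evenEmb ∈ closedRightIdeal :=
  Submodule.le_topologicalClosure _ (mem_rightIdealSpan₂.2 ⟨1, 0, by simp⟩)

lemma tendsto_inner_single_odd {X : H →L[ℂ] H} (hX : X ∈ closedRightIdeal) :
    Tendsto (fun k => ⟪lp.single 2 (2 * k + 1) 1, X (lp.single 2 (2 * k + 1) 1)⟫_ℂ) atTop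
      (𝓝 0) := by
  refine closure_minimal (fun Y hY => ?_)
    (isClosed_setOf_tendsto_inner_map_self fun k => (lp.norm_single (by norm_num) _ _).trans_le
      (by simp)) hX
  obtain ⟨s, t, rfl⟩ := mem_rightIdealSpan₂.1 hY
  refine squeeze_zero_norm (a := fun k => (2⁻¹ : ℝ) ^ k * ‖t‖) (fun k => ?_)
    (by simpa using (tendsto_pow_atTop_nhds_zero_of_lt_one (by norm_num)
      (by norm_num : (2⁻¹ : ℝ) < 1)).mul_const ‖t‖)
  calc ‖⟪lp.single 2 (2 * k + 1) 1, _⟫_ℂ‖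
        = ‖(2⁻¹ : ℂ) ^ k * t (lp.single 2 (2 * k + 1) 1) k‖ := by
        simp [lp.inner_single_left, oddWeightedShift]
    _ ≤ 2⁻¹ ^ k * ‖t‖ := by
        rw [norm_mul, norm_pow, norm_inv, Complex.norm_two]
        gcongr
        refine (lp.norm_apply_le_norm two_ne_zero _ _).trans ((t.le_opNorm _).trans_eq ?_)
        rw [lp.norm_single (by norm_num), norm_one, mul_one]

lemma oddWeightedShift_single (k : ℕ) :
    oddWeightedShift (lp.single 2 k (2 ^ k)) = lp.single 2 (2 * k + 1) 1 := by
  refine ext_even_odd (fun j => ?_) fun j => ?_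
  · simp [oddWeightedShift, Pi.single_apply]
    omega
  · by_cases hj : j = k <;> simp [oddWeightedShift, hj]

lemma mul_oddWeightedShift_ne {E : H →L[ℂ] H} (hE : E ∈ closedRightIdeal) :
    E * oddWeightedShift ≠ oddWeightedShift := by
  intro h
  have hfix (k : ℕ) : E (lp.single 2 (2 * k + 1) 1) = lp.single 2 (2 * k + 1) 1 := by
    simpa [oddWeightedShift_single] using congr($h (lp.single 2 k (2 ^ k)))
  simpa [hfix, lp.norm_single] using tendsto_inner_single_odd hE

end NonconvergentApproximateIdentity

end

/-- There exist a complex Hilbert space `H`, a norm-closed right ideal `A` of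
`B(H)` and `a ∈ A` such that `A` has a contractive (sequential) approximate left
identity, yet for every contractive approximate left identity `(e_n)` of `A`, the
sequence `(a ∘ e_n)` fails to converge in norm. -/
theorem stmt_13 :
    ∃ (H : Type) (_ : NormedAddCommGroup H) (_ : InnerProductSpace ℂ H)
      (_ : CompleteSpace H) (A : Submodule ℂ (H →L[ℂ] H)),
      IsClosed (A : Set (H →L[ℂ] H)) ∧
      (∀ a ∈ A, ∀ T : H →L[ℂ] H, a ∘L T ∈ A) ∧
      ∃ a ∈ A,
        (∃ u : ℕ → (H →L[ℂ] H), (∀ n, u n ∈ A) ∧ (∀ n, ‖u n‖ ≤ 1) ∧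
          ∀ b ∈ A, Filter.Tendsto (fun n => (u n) ∘L b) Filter.atTop (nhds b)) ∧
        (∀ e : ℕ → (H →L[ℂ] H), (∀ n, e n ∈ A) → (∀ n, ‖e n‖ ≤ 1) →
          (∀ b ∈ A, Filter.Tendsto (fun n => (e n) ∘L b) Filter.atTop (nhds b)) →
          ¬ ∃ L : H →L[ℂ] H, Filter.Tendsto (fun n => a ∘L (e n)) Filter.atTop (nhds L)) := by
  open lp NonconvergentApproximateIdentity in
  refine ⟨H, inferInstance, inferInstance, inferInstance, closedRightIdeal,
    Submodule.isClosed_topologicalClosure _,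
    fun x hx T => mul_mem_topologicalClosure_rightIdealSpan₂ hx T, extendCLM evenEmb,
    extendCLM_evenEmb_mem,
    ⟨approxUnit, approxUnit_mem, norm_approxUnit_le, fun b hb => ?_⟩, ?_⟩
  · exact tendsto_mul_self_of_mem_topologicalClosure (C := 1) (by simpa using norm_approxUnit_le)
      (tendsto_const_nhds.congr fun n => (approxUnit_mul_extendCLM_evenEmb n).symm)
      tendsto_approxUnit_mul_oddWeightedShift hb
  · rintro e he - hcai ⟨L, hL⟩
    obtain ⟨E, hE, hEc⟩ := exists_mem_mul_eq_of_tendsto_mul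
      (Submodule.isClosed_topologicalClosure _) compCLM_evenEmb_mul_extendCLM_evenEmb he
      (hcai _ oddWeightedShift_mem) hL
    exact mul_oddWeightedShift_ne hE hEc
end

section
/- Let H and K be complex Hilbert spaces, let X ⊆ B(K, H) be a set of operators, let e ∈ X with e ∘ e* ∘ e = e, and let p ∈ B(H), q ∈ B(K) be orthogonal projections satisfying: p = p ∘ e ∘ e* = e ∘ e* ∘ p; q = q ∘ e* ∘ e = e* ∘ e ∘ q; p ∘ x ∘ y* = x ∘ y* ∘ p and q ∘ x* ∘ y = x* ∘ y ∘ q for all x, y ∈ X; p ∘ x ∈ X for all x ∈ X; and (1_H − p) ∘ x ∘ (1_K − e* ∘ e) = 0 for all x ∈ X. Then q₁ := e* ∘ (1_H − p) ∘ e ∘ (1_K − q) is an orthogonal projection on K (q₁ = q₁* = q₁ ∘ q₁) with q₁ ∘ q = q ∘ q₁ = 0, q₂ := 1_K − q − q₁ is also an orthogonal projection, and q₁ ∘ x* ∘ y = x* ∘ y ∘ q₁ for all x, y ∈ X. -/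
open ContinuousLinearMap in
private theorem oneComp' {E F : Type*} [NormedAddCommGroup E] [NormedAddCommGroup F]
    [NormedSpace ℂ E] [NormedSpace ℂ F] (f : E →L[ℂ] F) : (1 : F →L[ℂ] F) ∘L f = f := by
  rw [one_def, id_comp]

open ContinuousLinearMap in
private theorem compOne' {E F : Type*} [NormedAddCommGroup E] [NormedAddCommGroup F]
    [NormedSpace ℂ E] [NormedSpace ℂ F] (f : E →L[ℂ] F) : f ∘L (1 : E →L[ℂ] E) = f := by
  rw [one_def, comp_id]



set_option maxHeartbeats 2000000 in
open ContinuousLinearMap in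
/-- The key projection facts in the ideal decomposition of a TRO with predual:
with `e ∈ X` a partial isometry and `p`, `q` the associated projections,
`q₁ := e* (1 - p) e (1 - q)` is an orthogonal projection orthogonal to `q`,
`q₂ := 1 - q - q₁` is an orthogonal projection, and `q₁` commutes with `X* X`. -/
theorem stmt_14 {H K : Type*} [NormedAddCommGroup H] [InnerProductSpace ℂ H] [CompleteSpace H]
    [NormedAddCommGroup K] [InnerProductSpace ℂ K] [CompleteSpace K]
    (X : Set (K →L[ℂ] H)) (e : K →L[ℂ] H) (heX : e ∈ X)
    (hpartial : e ∘L ((adjoint e) ∘L e) = e)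
    (p : H →L[ℂ] H) (q : K →L[ℂ] K)
    (hp : adjoint p = p ∧ p ∘L p = p)
    (hq : adjoint q = q ∧ q ∘L q = q)
    (hpe : p = p ∘L (e ∘L (adjoint e)) ∧ p = (e ∘L (adjoint e)) ∘L p)
    (hqe : q = q ∘L ((adjoint e) ∘L e) ∧ q = ((adjoint e) ∘L e) ∘L q)
    (hpcomm : ∀ x ∈ X, ∀ y ∈ X,
      p ∘L (x ∘L (adjoint y)) = (x ∘L (adjoint y)) ∘L p)
    (hqcomm : ∀ x ∈ X, ∀ y ∈ X,
      q ∘L ((adjoint x) ∘L y) = ((adjoint x) ∘L y) ∘L q)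
    (hpX : ∀ x ∈ X, p ∘L x ∈ X)
    (hnull : ∀ x ∈ X, (1 - p) ∘L (x ∘L (1 - ((adjoint e) ∘L e))) = 0)
    (q₁ q₂ : K →L[ℂ] K)
    (hq₁ : q₁ = (adjoint e) ∘L ((1 - p) ∘L (e ∘L (1 - q))))
    (hq₂ : q₂ = 1 - q - q₁) :
    (adjoint q₁ = q₁ ∧ q₁ ∘L q₁ = q₁) ∧
    (q₁ ∘L q = 0 ∧ q ∘L q₁ = 0) ∧
    (adjoint q₂ = q₂ ∧ q₂ ∘L q₂ = q₂) ∧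
    (∀ x ∈ X, ∀ y ∈ X,
      q₁ ∘L ((adjoint x) ∘L y) = ((adjoint x) ∘L y) ∘L q₁) := by
  have hone : adjoint (1 : K →L[ℂ] K) = 1 := by rw [one_def, adjoint_id]
  have honeH : adjoint (1 : H →L[ℂ] H) = 1 := by rw [one_def, adjoint_id]
  have hsubK : ∀ a b : K →L[ℂ] K, adjoint (a - b) = adjoint a - adjoint b := fun a b =>
    map_sub (adjoint : (K →L[ℂ] K) ≃ₗᵢ⋆[ℂ] (K →L[ℂ] K)) a b
  have hsubH : ∀ a b : H →L[ℂ] H, adjoint (a - b) = adjoint a - adjoint b := fun a b =>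
    map_sub (adjoint : (H →L[ℂ] H) ≃ₗᵢ⋆[ℂ] (H →L[ℂ] H)) a b
  have hp' : adjoint (1 - p) = 1 - p := by rw [hsubH, honeH, hp.1]
  have hq' : adjoint (1 - q) = 1 - q := by rw [hsubK, hone, hq.1]
  have h1v : adjoint (1 - (adjoint e) ∘L e) = 1 - (adjoint e) ∘L e := by
    rw [hsubK, hone, adjoint_comp, adjoint_adjoint]
  have hwp : (e ∘L adjoint e) ∘L p = p := hpe.2.symm
  set A : K →L[ℂ] K := adjoint e ∘L ((1 - p) ∘L e) with hAdef
  have hq₁A : q₁ = A ∘L (1 - q) := by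
    rw [hq₁, hAdef]; simp only [comp_assoc]
  -- q commutes with A
  have cqv : q ∘L (adjoint e ∘L e) = (adjoint e ∘L e) ∘L q := hqcomm e heX e heX
  have cqB : q ∘L (adjoint e ∘L (p ∘L e)) = (adjoint e ∘L (p ∘L e)) ∘L q := by
    have h := hqcomm (p ∘L e) (hpX e heX) e heX
    rw [adjoint_comp, hp.1, comp_assoc] at h
    exact h
  have hA' : A = (adjoint e ∘L e) - adjoint e ∘L (p ∘L e) := by
    rw [hAdef, sub_comp, oneComp', comp_sub]
  have cqA : q ∘L A = A ∘L q := by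
    rw [hA', comp_sub, sub_comp, cqv, cqB]
  -- A self-adjoint
  have hAsa : adjoint A = A := by
    rw [hAdef, adjoint_comp, adjoint_comp, adjoint_adjoint, hp', comp_assoc]
  -- A idempotent
  have h1p : (1 - p) ∘L (1 - p) = 1 - p := by
    have hm : ((1 : H →L[ℂ] H) - p) * (1 - p) = 1 - p := by
      have h2 : p * p = p := hp.2
      calc ((1 : H →L[ℂ] H) - p) * (1 - p) = 1 - p - p + p * p := by noncomm_ring
        _ = 1 - p := by rw [h2]; abel
    rwa [mul_def] at hm
  have inner1 : (e ∘L adjoint e) ∘L ((1 - p) ∘L e) = (1 - p) ∘L e := by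
    rw [sub_comp, oneComp', comp_sub, comp_assoc, hpartial, ← comp_assoc, hwp]
  have mid : ((1 - p) ∘L e) ∘L (adjoint e ∘L ((1 - p) ∘L e)) = (1 - p) ∘L e :=
    calc ((1 - p) ∘L e) ∘L (adjoint e ∘L ((1 - p) ∘L e))
        = (1 - p) ∘L ((e ∘L adjoint e) ∘L ((1 - p) ∘L e)) := by
          simp only [comp_assoc]
      _ = (1 - p) ∘L ((1 - p) ∘L e) := by rw [inner1]
      _ = (1 - p) ∘L e := by rw [← comp_assoc, h1p]
  have hAA : A ∘L A = A := by
    rw [hAdef, comp_assoc (adjoint e) ((1 - p) ∘L e) (adjoint e ∘L ((1 - p) ∘L e)), mid]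
  -- pass to the ring of endomorphisms of K
  have cQA : Commute q A := by
    show q * A = A * q
    rw [mul_def, mul_def]; exact cqA
  have c1A : Commute (1 - q) A := (Commute.one_left A).sub_left cQA
  have cA1q : (1 - q) ∘L A = A ∘L (1 - q) := by
    have h := c1A.eq
    rwa [mul_def, mul_def] at h
  have hq2m : q * q = q := hq.2
  have hAAm : A * A = A := hAA
  have h1qm : ((1 : K →L[ℂ] K) - q) * (1 - q) = 1 - q := by
    calc ((1 : K →L[ℂ] K) - q) * (1 - q) = 1 - q - q + q * q := by noncomm_ring
      _ = 1 - q := by rw [hq2m]; abel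
  have hq₁m : q₁ = A * (1 - q) := hq₁A
  -- conclusions about q₁
  have goal_sa : adjoint q₁ = q₁ := by
    rw [hq₁A, adjoint_comp, hAsa, hq', cA1q]
  have goal_q1q : q₁ ∘L q = 0 := by
    have h0 : ((1 : K →L[ℂ] K) - q) ∘L q = 0 := by
      have hm : ((1 : K →L[ℂ] K) - q) * q = 0 := by
        calc ((1 : K →L[ℂ] K) - q) * q = q - q * q := by noncomm_ring
          _ = 0 := by rw [hq2m, sub_self]
      rwa [mul_def] at hm
    rw [hq₁A, comp_assoc, h0, comp_zero]
  have goal_qq1 : q ∘L q₁ = 0 := by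
    have h0 : q ∘L ((1 : K →L[ℂ] K) - q) = 0 := by
      have hm : q * ((1 : K →L[ℂ] K) - q) = 0 := by
        calc q * ((1 : K →L[ℂ] K) - q) = q - q * q := by noncomm_ring
          _ = 0 := by rw [hq2m, sub_self]
      rwa [mul_def] at hm
    rw [hq₁A, ← comp_assoc, cqA, comp_assoc, h0, comp_zero]
  have goal_idem : q₁ ∘L q₁ = q₁ := by
    have hm : q₁ * q₁ = q₁ := by
      calc q₁ * q₁ = (A * (1 - q)) * (A * (1 - q)) := by rw [hq₁m]
        _ = A * ((1 - q) * (A * (1 - q))) := by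
            rw [mul_assoc A (1 - q) (A * (1 - q))]
        _ = A * (((1 - q) * A) * (1 - q)) := by
            rw [mul_assoc (1 - q) A (1 - q)]
        _ = A * ((A * (1 - q)) * (1 - q)) := by rw [c1A.eq]
        _ = A * (A * ((1 - q) * (1 - q))) := by rw [mul_assoc A (1 - q) (1 - q)]
        _ = (A * A) * ((1 - q) * (1 - q)) := by rw [mul_assoc A A ((1 - q) * (1 - q))]
        _ = A * (1 - q) := by rw [hAAm, h1qm]
        _ = q₁ := hq₁m.symm
    rwa [mul_def] at hm
  have hq1qm : q₁ * q = 0 := goal_q1q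
  have hqq1m : q * q₁ = 0 := goal_qq1
  have hq1im : q₁ * q₁ = q₁ := goal_idem
  refine ⟨⟨goal_sa, goal_idem⟩, ⟨goal_q1q, goal_qq1⟩, ⟨?_, ?_⟩, ?_⟩
  · rw [hq₂, hsubK, hsubK, hone, hq.1, goal_sa]
  · have hm : ((1 : K →L[ℂ] K) - q - q₁) * (1 - q - q₁) = 1 - q - q₁ := by
      calc ((1 : K →L[ℂ] K) - q - q₁) * (1 - q - q₁)
          = 1 - q - q₁ - q + q * q + q * q₁ - q₁ + q₁ * q + q₁ * q₁ := by noncomm_ring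
        _ = 1 - q - q₁ := by rw [hq2m, hqq1m, hq1qm, hq1im]; abel
    rw [hq₂, ← mul_def]
    exact hm
  · intro x hx y hy
    -- (1-q) commutes with x* y
    have cq'l : ∀ f : K →L[ℂ] K, (1 - q) ∘L (adjoint x ∘L (y ∘L f))
        = adjoint x ∘L (y ∘L ((1 - q) ∘L f)) := by
      have cQ : Commute q (adjoint x ∘L y) := by
        show q * (adjoint x ∘L y) = (adjoint x ∘L y) * q
        rw [mul_def, mul_def]; exact hqcomm x hx y hy
      have base : (1 - q) ∘L (adjoint x ∘L y) = (adjoint x ∘L y) ∘L (1 - q) := by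
        have h := ((Commute.one_left (adjoint x ∘L y)).sub_left cQ).eq
        rwa [mul_def, mul_def] at h
      intro f
      calc (1 - q) ∘L (adjoint x ∘L (y ∘L f)) = ((1 - q) ∘L (adjoint x ∘L y)) ∘L f := by
            simp only [comp_assoc]
        _ = ((adjoint x ∘L y) ∘L (1 - q)) ∘L f := by rw [base]
        _ = adjoint x ∘L (y ∘L ((1 - q) ∘L f)) := by simp only [comp_assoc]
    -- (1-p) commutes with e x*
    have c1 : ∀ f : K →L[ℂ] H, (1 - p) ∘L (e ∘L (adjoint x ∘L f))
        = e ∘L (adjoint x ∘L ((1 - p) ∘L f)) := by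
      have cpex : p ∘L (e ∘L adjoint x) = (e ∘L adjoint x) ∘L p := by
        have h := congrArg adjoint (hpcomm x hx e heX)
        simp only [adjoint_comp, adjoint_adjoint, hp.1] at h
        exact h.symm
      have cP : Commute p (e ∘L adjoint x) := by
        show p * (e ∘L adjoint x) = (e ∘L adjoint x) * p
        rw [mul_def, mul_def]; exact cpex
      have base : (1 - p) ∘L (e ∘L adjoint x) = (e ∘L adjoint x) ∘L (1 - p) := by
        have h := ((Commute.one_left (e ∘L adjoint x)).sub_left cP).eq
        rwa [mul_def, mul_def] at h
      intro f
      calc (1 - p) ∘L (e ∘L (adjoint x ∘L f)) = ((1 - p) ∘L (e ∘L adjoint x)) ∘L f := by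
            simp only [comp_assoc]
        _ = ((e ∘L adjoint x) ∘L (1 - p)) ∘L f := by rw [base]
        _ = e ∘L (adjoint x ∘L ((1 - p) ∘L f)) := by simp only [comp_assoc]
    -- (1-p) commutes with y e*
    have c2 : ∀ f : K →L[ℂ] H, y ∘L (adjoint e ∘L ((1 - p) ∘L f))
        = (1 - p) ∘L (y ∘L (adjoint e ∘L f)) := by
      have cP : Commute p (y ∘L adjoint e) := by
        show p * (y ∘L adjoint e) = (y ∘L adjoint e) * p
        rw [mul_def, mul_def]; exact hpcomm y hy e heX
      have base : (1 - p) ∘L (y ∘L adjoint e) = (y ∘L adjoint e) ∘L (1 - p) := by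
        have h := ((Commute.one_left (y ∘L adjoint e)).sub_left cP).eq
        rwa [mul_def, mul_def] at h
      intro f
      calc y ∘L (adjoint e ∘L ((1 - p) ∘L f)) = ((y ∘L adjoint e) ∘L (1 - p)) ∘L f := by
            simp only [comp_assoc]
        _ = ((1 - p) ∘L (y ∘L adjoint e)) ∘L f := by rw [base]
        _ = (1 - p) ∘L (y ∘L (adjoint e ∘L f)) := by simp only [comp_assoc]
    -- null facts
    have ny : ∀ f : K →L[ℂ] K, (1 - p) ∘L (y ∘L f)
        = (1 - p) ∘L (y ∘L (adjoint e ∘L (e ∘L f))) := by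
      have h := hnull y hy
      rw [comp_sub, compOne', comp_sub] at h
      have ny0 := sub_eq_zero.mp h
      rw [← comp_assoc y (adjoint e) e] at ny0
      intro f
      calc (1 - p) ∘L (y ∘L f) = ((1 - p) ∘L y) ∘L f := by simp only [comp_assoc]
        _ = ((1 - p) ∘L ((y ∘L adjoint e) ∘L e)) ∘L f := by rw [ny0]
        _ = (1 - p) ∘L (y ∘L (adjoint e ∘L (e ∘L f))) := by simp only [comp_assoc]
    have nx : ∀ f : K →L[ℂ] H, adjoint e ∘L (e ∘L (adjoint x ∘L ((1 - p) ∘L f)))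
        = adjoint x ∘L ((1 - p) ∘L f) := by
      have h := congrArg adjoint (hnull x hx)
      simp only [adjoint_comp, hp', h1v, map_zero] at h
      rw [sub_comp, oneComp', sub_comp] at h
      have nx0 := sub_eq_zero.mp h
      intro f
      calc adjoint e ∘L (e ∘L (adjoint x ∘L ((1 - p) ∘L f)))
          = (((adjoint e ∘L e) ∘L adjoint x) ∘L (1 - p)) ∘L f := by simp only [comp_assoc]
        _ = (adjoint x ∘L (1 - p)) ∘L f := by rw [← nx0]
        _ = adjoint x ∘L ((1 - p) ∘L f) := by simp only [comp_assoc]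
    -- main computation
    calc q₁ ∘L (adjoint x ∘L y)
        = A ∘L ((1 - q) ∘L (adjoint x ∘L (y ∘L (1 : K →L[ℂ] K)))) := by
          rw [hq₁A]; simp only [comp_assoc, compOne']
      _ = adjoint e ∘L (e ∘L (adjoint x ∘L ((1 - p) ∘L (y ∘L ((1 - q) ∘L (1 : K →L[ℂ] K)))))) := by
          rw [cq'l, hAdef]; simp only [comp_assoc]; rw [c1]
      _ = adjoint e ∘L (e ∘L (adjoint x ∘L ((1 - p) ∘L (y ∘L (adjoint e ∘L (e ∘L ((1 - q) ∘L (1 : K →L[ℂ] K)))))))) := by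
          rw [ny]
      _ = adjoint x ∘L ((1 - p) ∘L (y ∘L (adjoint e ∘L (e ∘L ((1 - q) ∘L (1 : K →L[ℂ] K)))))) := by
          rw [nx]
      _ = adjoint x ∘L (y ∘L (adjoint e ∘L ((1 - p) ∘L (e ∘L ((1 - q) ∘L (1 : K →L[ℂ] K)))))) := by
          rw [← c2]
      _ = (adjoint x ∘L y) ∘L q₁ := by
          rw [hq₁]; simp only [comp_assoc, compOne']
end

section
/- Let H and K be complex Hilbert spaces, let X ⊆ B(K, H) be a set of operators, let e ∈ X with e ∘ e* ∘ e = e, and let p ∈ B(H), q ∈ B(K) be orthogonal projections satisfying: p = p ∘ e ∘ e* = e ∘ e* ∘ p; q = q ∘ e* ∘ e = e* ∘ e ∘ q; p ∘ x ∘ y* = x ∘ y* ∘ p and q ∘ x* ∘ y = x* ∘ y ∘ q for all x, y ∈ X; p ∘ x ∈ X for all x ∈ X; and (1_H − p) ∘ x ∘ (1_K − e* ∘ e) = 0 for all x ∈ X. Set q₁ := e* ∘ (1_H − p) ∘ e ∘ (1_K − q) and q₂ := 1_K − q − q₁. Then every x ∈ X satisfies ‖x‖ = max(‖x ∘ q₁‖,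 ‖x ∘ q‖, ‖x ∘ q₂‖); that is, X decomposes as the ℓ∞-direct sum X∘q₁ ⊕∞ X∘q ⊕∞ X∘q₂. -/
/-!
Put `g := e* (1 - p) e`. It is a projection commuting with `q`, so `q₁ = (1 - q) g` and
`q₂ = (1 - q) (1 - g)`. Both `q` and `g` commute with `x* x`: for `q` this is a hypothesis, and
`g x* x = x* (1 - p) x` because `(1 - p) x` vanishes off the initial space `e* e` of `e`.
Whenever a projection `P` commutes with `x* x`, the vectors `x P v` and `x (1 - P) v` are
orthogonal, so `‖x‖ = max ‖x P‖ ‖x (1 - P)‖`. Applying this to `q` and `x`, then to `g` and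
`x (1 - q)`, splits `‖x‖` as claimed.
-/

namespace ContinuousLinearMap

variable {𝕜 E F : Type*} [RCLike 𝕜]
  [NormedAddCommGroup E] [InnerProductSpace 𝕜 E] [CompleteSpace E]
  [NormedAddCommGroup F] [InnerProductSpace 𝕜 F] [CompleteSpace F]

theorem norm_sq_apply_eq_add_of_commute {x : E →L[𝕜] F} {P : E →L[𝕜] E}
    (hP : IsStarProjection P) (hxP : Commute P (adjoint x ∘L x)) (v : E) :
    ‖x v‖ ^ 2 = ‖x (P v)‖ ^ 2 + ‖x ((1 - P) v)‖ ^ 2 := by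
  have horth : inner 𝕜 (x (P v)) (x ((1 - P) v)) = 0 :=
    calc inner 𝕜 (x (P v)) (x ((1 - P) v)) = inner 𝕜 (P ((adjoint x ∘L x) v)) ((1 - P) v) := by
          rw [← adjoint_inner_left, ← comp_apply (adjoint x) x, ← mul_apply_eq_comp, ← hxP.eq,
            mul_apply_eq_comp]
      _ = inner 𝕜 ((adjoint x ∘L x) v) ((P * (1 - P)) v) := by
          rw [mul_apply_eq_comp, ← adjoint_inner_right, hP.isSelfAdjoint.adjoint_eq]
      _ = 0 := by rw [hP.mul_one_sub_self, zero_apply, inner_zero_right]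
  have hv : P v + (1 - P) v = v := by simp
  rw [← hv, map_add, sq, sq, sq, norm_add_sq_eq_norm_sq_add_norm_sq_of_inner_eq_zero _ _ horth, hv]

theorem _root_.IsStarProjection.norm_sq_eq_norm_sq_add_norm_sq {P : E →L[𝕜] E}
    (hP : IsStarProjection P) (v : E) : ‖v‖ ^ 2 = ‖P v‖ ^ 2 + ‖(1 - P) v‖ ^ 2 := by
  have h1 : Commute P (adjoint (1 : E →L[𝕜] E) ∘L 1) := by
    rw [← star_eq_adjoint, star_one]
    exact Commute.one_right P
  simpa using norm_sq_apply_eq_add_of_commute hP h1 v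

theorem norm_eq_max_norm_comp_of_commute {x : E →L[𝕜] F} {P : E →L[𝕜] E}
    (hP : IsStarProjection P) (hxP : Commute P (adjoint x ∘L x)) :
    ‖x‖ = max ‖x ∘L P‖ ‖x ∘L (1 - P)‖ := by
  refine le_antisymm ?_ (max_le ?_ ?_)
  · set M := max ‖x ∘L P‖ ‖x ∘L (1 - P)‖
    refine opNorm_le_bound x (by positivity) fun v ↦ le_of_sq_le_sq ?_ (by positivity)
    have hPv : x (P v) = (x ∘L P) (P v) := by
      rw [comp_apply, ← mul_apply_eq_comp, hP.isIdempotentElem.eq]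
    have hQv : x ((1 - P) v) = (x ∘L (1 - P)) ((1 - P) v) := by
      rw [comp_apply, ← mul_apply_eq_comp, hP.one_sub.isIdempotentElem.eq]
    calc ‖x v‖ ^ 2 = ‖x (P v)‖ ^ 2 + ‖x ((1 - P) v)‖ ^ 2 :=
          norm_sq_apply_eq_add_of_commute hP hxP v
      _ ≤ (M * ‖P v‖) ^ 2 + (M * ‖(1 - P) v‖) ^ 2 := by
          rw [hPv, hQv]
          gcongr
          · exact (le_opNorm _ _).trans (by gcongr; exact le_max_left _ _)
          · exact (le_opNorm _ _).trans (by gcongr; exact le_max_right _ _)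
      _ = (M * ‖v‖) ^ 2 := by
          rw [mul_pow, mul_pow, mul_pow, hP.norm_sq_eq_norm_sq_add_norm_sq v]
          ring
  · exact (opNorm_comp_le _ _).trans (mul_le_of_le_one_right (norm_nonneg x) hP.norm_le)
  · exact (opNorm_comp_le _ _).trans (mul_le_of_le_one_right (norm_nonneg x) hP.one_sub.norm_le)

theorem isSelfAdjoint_adjoint_comp_self (x : E →L[𝕜] F) : IsSelfAdjoint (adjoint x ∘L x) :=
  isSelfAdjoint_iff'.mpr (by rw [adjoint_comp, adjoint_adjoint])

theorem commute_adjoint_comp_self_comp {x : E →L[𝕜] F} {P Q : E →L[𝕜] E} (hQ : IsSelfAdjoint Q)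
    (hPx : Commute P (adjoint x ∘L x)) (hPQ : Commute P Q) :
    Commute P (adjoint (x ∘L Q) ∘L (x ∘L Q)) := by
  rw [adjoint_comp, hQ.adjoint_eq, comp_assoc, ← comp_assoc (adjoint x) x Q]
  exact hPQ.mul_right (hPx.mul_right hPQ)

theorem _root_.IsStarProjection.adjoint_comp_comp {r : F →L[𝕜] F} (hr : IsStarProjection r)
    {e : E →L[𝕜] F} (he : e ∘L (adjoint e ∘L e) = e) (hre : Commute r (e ∘L adjoint e)) :
    IsStarProjection (adjoint e ∘L (r ∘L e)) := by
  refine ⟨?_, hr.isSelfAdjoint.adjoint_conj e⟩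
  have hre' (w : F) : r (e (adjoint e w)) = e (adjoint e (r w)) := congr($hre.eq w)
  have hrr (w : F) : r (r w) = r w := congr($hr.isIdempotentElem.eq w)
  have he' (w : F) : adjoint e (e (adjoint e w)) = adjoint e w := by
    simpa [adjoint_comp] using congr($(congrArg adjoint he) w)
  ext v
  simp [mul_apply_eq_comp, hre', hrr, he']

theorem adjoint_comp_one_sub_comp (e : E →L[𝕜] F) (p : F →L[𝕜] F) :
    adjoint e ∘L ((1 - p) ∘L e) = adjoint e ∘L e - adjoint e ∘L (p ∘L e) := by
  rw [sub_comp, comp_sub, one_def, id_comp]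

theorem adjoint_comp_comp_comp_adjoint_comp_self {r : F →L[𝕜] F} (hr : IsStarProjection r)
    {e x : E →L[𝕜] F} (hrex : Commute r (e ∘L adjoint x))
    (hx : r ∘L (x ∘L (1 - adjoint e ∘L e)) = 0) :
    (adjoint e ∘L (r ∘L e)) ∘L (adjoint x ∘L x) = adjoint x ∘L (r ∘L x) := by
  have hy : (r ∘L x) ∘L (adjoint e ∘L e) = r ∘L x := by
    rw [one_def, comp_sub, comp_sub, comp_id, sub_eq_zero] at hx
    rw [comp_assoc, hx]
  have hyy : adjoint x ∘L (r ∘L x) = adjoint (r ∘L x) ∘L (r ∘L x) := by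
    rw [adjoint_comp, hr.isSelfAdjoint.adjoint_eq, comp_assoc, ← comp_assoc r r x,
      show r ∘L r = r from hr.isIdempotentElem.eq]
  have hey : (adjoint e ∘L e) ∘L adjoint (r ∘L x) = adjoint (r ∘L x) := by
    simpa only [adjoint_comp (r ∘L x) (adjoint e ∘L e),
      (isSelfAdjoint_adjoint_comp_self e).adjoint_eq] using congrArg adjoint hy
  calc (adjoint e ∘L (r ∘L e)) ∘L (adjoint x ∘L x)
      = adjoint e ∘L ((r ∘L (e ∘L adjoint x)) ∘L x) := by simp only [comp_assoc]
    _ = adjoint e ∘L ((e ∘L adjoint x) ∘L (r ∘L x)) := by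
        rw [show r ∘L (e ∘L adjoint x) = (e ∘L adjoint x) ∘L r from hrex.eq]
        simp only [comp_assoc]
    _ = (adjoint e ∘L e) ∘L (adjoint (r ∘L x) ∘L (r ∘L x)) := by
        rw [← hyy]
        simp only [comp_assoc]
    _ = adjoint x ∘L (r ∘L x) := by rw [← comp_assoc, hey, hyy]

end ContinuousLinearMap

open ContinuousLinearMap in
/-- The norm-decomposition step in the ideal decomposition of a TRO with predual:
with `e ∈ X` a partial isometry, `p`, `q` the associated projections,
`q₁ := e* (1 - p) e (1 - q)` and `q₂ := 1 - q - q₁`, every `x ∈ X` satisfies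
`‖x‖ = max (‖x q₁‖, ‖x q‖, ‖x q₂‖)`; that is, `X = Xq₁ ⊕∞ Xq ⊕∞ Xq₂`. -/
theorem stmt_15 {H K : Type*} [NormedAddCommGroup H] [InnerProductSpace ℂ H] [CompleteSpace H]
    [NormedAddCommGroup K] [InnerProductSpace ℂ K] [CompleteSpace K]
    (X : Set (K →L[ℂ] H)) (e : K →L[ℂ] H) (heX : e ∈ X)
    (hpartial : e ∘L ((adjoint e) ∘L e) = e)
    (p : H →L[ℂ] H) (q : K →L[ℂ] K)
    (hp : adjoint p = p ∧ p ∘L p = p)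
    (hq : adjoint q = q ∧ q ∘L q = q)
    (hpe : p = p ∘L (e ∘L (adjoint e)) ∧ p = (e ∘L (adjoint e)) ∘L p)
    (hqe : q = q ∘L ((adjoint e) ∘L e) ∧ q = ((adjoint e) ∘L e) ∘L q)
    (hpcomm : ∀ x ∈ X, ∀ y ∈ X,
      p ∘L (x ∘L (adjoint y)) = (x ∘L (adjoint y)) ∘L p)
    (hqcomm : ∀ x ∈ X, ∀ y ∈ X,
      q ∘L ((adjoint x) ∘L y) = ((adjoint x) ∘L y) ∘L q)
    (hpX : ∀ x ∈ X, p ∘L x ∈ X)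
    (hnull : ∀ x ∈ X, (1 - p) ∘L (x ∘L (1 - ((adjoint e) ∘L e))) = 0)
    (q₁ q₂ : K →L[ℂ] K)
    (hq₁ : q₁ = (adjoint e) ∘L ((1 - p) ∘L (e ∘L (1 - q))))
    (hq₂ : q₂ = 1 - q - q₁) :
    ∀ x ∈ X, ‖x‖ = max (max ‖x ∘L q₁‖ ‖x ∘L q‖) ‖x ∘L q₂‖ := by
  intro x hx
  have hpP : IsStarProjection p := ⟨hp.2, isSelfAdjoint_iff'.mpr hp.1⟩
  have hqP : IsStarProjection q := ⟨hq.2, isSelfAdjoint_iff'.mpr hq.1⟩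
  set g := adjoint e ∘L ((1 - p) ∘L e) with hg_def
  have hg : IsStarProjection g :=
    hpP.one_sub.adjoint_comp_comp hpartial ((Commute.one_left _).sub_left (hpe.1.symm.trans hpe.2))
  have hqg : Commute q g := by
    rw [hg_def, adjoint_comp_one_sub_comp]
    exact (show Commute q (adjoint e ∘L e) from hqe.1.symm.trans hqe.2).sub_right
      (hqcomm e heX (p ∘L e) (hpX e heX))
  have hgx : Commute g (adjoint x ∘L x) :=
    IsSelfAdjoint.commute_of_mul_eq_isSelfAdjoint _ _ _ hg.isSelfAdjoint
      (isSelfAdjoint_adjoint_comp_self x) (hpP.one_sub.isSelfAdjoint.adjoint_conj x)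
      (adjoint_comp_comp_comp_adjoint_comp_self hpP.one_sub
        ((Commute.one_left _).sub_left (hpcomm e heX x hx)) (hnull x hx))
  have hq₁g : q₁ = (1 - q) * g := hq₁.trans ((Commute.one_left _).sub_left hqg).eq.symm
  have hq₂g : q₂ = (1 - q) * (1 - g) := by rw [hq₂, hq₁g]; noncomm_ring
  calc ‖x‖ = max ‖x ∘L q‖ ‖x ∘L (1 - q)‖ :=
        norm_eq_max_norm_comp_of_commute hqP (hqcomm x hx x hx)
    _ = max ‖x ∘L q‖ (max ‖x ∘L q₁‖ ‖x ∘L q₂‖) := by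
        rw [norm_eq_max_norm_comp_of_commute hg
          (commute_adjoint_comp_self_comp hqP.one_sub.isSelfAdjoint hgx
            ((Commute.one_right _).sub_right hqg.symm)), hq₁g, hq₂g, mul_def, mul_def,
          comp_assoc, comp_assoc]
    _ = max (max ‖x ∘L q₁‖ ‖x ∘L q‖) ‖x ∘L q₂‖ := by rw [max_left_comm, max_assoc]
end
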